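/- arXiv:0812.2473 — 6 statements merged into one kernel-verified Lean document; each statement's English description precedes it below -/
import Mathlib

section
/- Commutativity (abelian property) of the activated random walk graphical construction: fix m, an envelope configuration F, and an initial state X with all counters zero. Suppose that for some label sequence N ∈ {1,…,m}^ℕ the sequence N·X stabilizes at a state X̃. Then for every label sequence N' ∈ 𝒩_m, the sequence N'·X also stabilizes, at a state having the same counters j_z as X̃ at every site z ∈ ℤ (hence the same total number of opened envelopes and the same number R_z of opened jump instructions at every site) and the same multiset of (position, type) pairs as X̃. -/
/-- A state of the activated random walk graphical construction with `m` particles on `ℤ`: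
positions, types (`true` = B = active, `false` = A = passive) and envelope counters. -/
structure ARWState (m : ℕ) where
  pos : Fin m → ℤ
  typ : Fin m → Bool
  cnt : ℤ → ℕ

/-- An envelope configuration takes values in `{-1, 0, 1}`:
`±1` is a jump instruction, `0` a sleep instruction. -/
def ValidEnvelopes (F : ℤ → ℕ → ℤ) : Prop :=
  ∀ z j, F z j = -1 ∨ F z j = 0 ∨ F z j = 1

/-- The action `n · X` of a label `n` on a state `X`. -/
def arwStep {m : ℕ} (F : ℤ → ℕ → ℤ) (n : Fin m) (X : ARWState m) : ARWState m :=
  if X.typ n = false then X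
  else
    let z := X.pos n
    let instr := F z (X.cnt z)
    let cnt' : ℤ → ℕ := fun w => if w = z then X.cnt w + 1 else X.cnt w
    if instr = 0 then
      { pos := X.pos
        typ := fun k =>
          if k = n then (if ∃ l, l ≠ n ∧ X.pos l = z then true else false) else X.typ k
        cnt := cnt' }
    else
      let pos' : Fin m → ℤ := fun k => if k = n then z + instr else X.pos k
      { pos := pos'
        typ := fun k => if pos' k = z + instr then true else X.typ k
        cnt := cnt' }

/-- The evolution `N · X`: `X₀ = X`, `X_{k+1} = n_{k+1} · X_k`. -/
def arwEvolve {m : ℕ} (F : ℤ → ℕ → ℤ) (N : ℕ → Fin m) (X : ARWState m) : ℕ → ARWState m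
  | 0 => X
  | k + 1 => arwStep F (N k) (arwEvolve F N X k)

/-- `N · X` stabilizes at `X'`: eventually the sequence is constantly `X'`,
and every particle of `X'` is passive. -/
def StabilizesAt {m : ℕ} (F : ℤ → ℕ → ℤ) (N : ℕ → Fin m) (X X' : ARWState m) : Prop :=
  (∃ k₀, ∀ k, k₀ ≤ k → arwEvolve F N X k = X') ∧ ∀ n, X'.typ n = false

/-- `𝒩_m`: label sequences in which every label occurs infinitely often. -/
def FairSeq {m : ℕ} (N : ℕ → Fin m) : Prop :=
  ∀ n : Fin m, ∀ k : ℕ, ∃ k', k ≤ k' ∧ N k' = n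

/-- Number of jump instructions among the first `c` envelopes at site `z`. -/
def jumpCount (F : ℤ → ℕ → ℤ) (z : ℤ) (c : ℕ) : ℕ :=
  ((Finset.range c).filter (fun j => F z j ≠ 0)).card


/-!
Forget the labels of the particles: what remains of a state is its envelope counters together
with the multiset of (position, type) pairs, and a step of an active particle at `z` becomes a
*toppling* of `z`, which depends on the unlabelled state alone. A toppling is legal when `z`
carries an active particle. Legal topplings at distinct sites commute and stay legal, so the
exchange argument for abelian networks applies: a legal toppling that is available at the start
of a legal run ending in a stable state can be moved to its front. Hence every legal run is at
most as long as a stabilizing one, and all stabilizing runs end in the same unlabelled state.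
Along `N'` the number of nontrivial steps is thus bounded, so eventually every step is
trivial, and as every label keeps being called, all particles are then passive.
-/

section LegalMoves

variable {ι S : Type*} (move : ι → S → S) (legal : ι → S → Prop)

def applyMoves (l : List ι) (s : S) : S :=
  l.foldl (fun s i => move i s) s

def LegalRun : List ι → S → Prop
  | [], _ => True
  | i :: l, s => legal i s ∧ LegalRun l (move i s)

def IsStable (s : S) : Prop :=
  ∀ i, ¬ legal i s

def LegalMovesCommute : Prop :=
  ∀ ⦃i j s⦄, i ≠ j → legal i s → legal j s →
    legal i (move j s) ∧ move i (move j s) = move j (move i s)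

variable {move legal}

@[simp] lemma applyMoves_nil (s : S) : applyMoves move [] s = s := rfl

@[simp] lemma applyMoves_cons (i : ι) (l : List ι) (s : S) :
    applyMoves move (i :: l) s = applyMoves move l (move i s) := rfl

lemma applyMoves_append (l l' : List ι) (s : S) :
    applyMoves move (l ++ l') s = applyMoves move l' (applyMoves move l s) :=
  List.foldl_append

lemma legalRun_append {l l' : List ι} {s : S} :
    LegalRun move legal (l ++ l') s ↔
      LegalRun move legal l s ∧ LegalRun move legal l' (applyMoves move l s) := by
  induction l generalizing s with
  | nil => simp [LegalRun]
  | cons i l ih => simp [LegalRun, ih, and_assoc]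

lemma LegalRun.append_singleton {l : List ι} {s : S} {i : ι} (hl : LegalRun move legal l s)
    (hi : legal i (applyMoves move l s)) : LegalRun move legal (l ++ [i]) s :=
  legalRun_append.mpr ⟨hl, hi, trivial⟩

variable (hc : LegalMovesCommute move legal)
include hc

/-- `w` occurs in `α`, since otherwise it would stay legal up to the stable end of `α`. -/
lemma LegalMovesCommute.exists_perm_cons {α : List ι} {s : S} (hα : LegalRun move legal α s)
    (hst : IsStable legal (applyMoves move α s)) {w : ι} (hw : legal w s) :
    ∃ α', LegalRun move legal α' (move w s) ∧
      applyMoves move α' (move w s) = applyMoves move α s ∧ (w :: α').Perm α := by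
  induction α generalizing s with
  | nil => exact absurd hw (hst w)
  | cons z α ih =>
    obtain ⟨hz, hα⟩ := hα
    by_cases hzw : z = w
    · subst hzw
      exact ⟨α, hα, rfl, .refl _⟩
    obtain ⟨hwz, -⟩ := hc (Ne.symm hzw) hw hz
    obtain ⟨α', hα', hrun, hperm⟩ := ih hα hst hwz
    obtain ⟨hzw', hcomm⟩ := hc hzw hz hw
    refine ⟨z :: α', ⟨hzw', ?_⟩, ?_, (List.Perm.swap z w α').trans (hperm.cons z)⟩
    · rwa [hcomm]
    · rwa [applyMoves_cons, hcomm]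

lemma LegalMovesCommute.length_le {α β : List ι} {s : S} (hα : LegalRun move legal α s)
    (hst : IsStable legal (applyMoves move α s)) (hβ : LegalRun move legal β s) :
    β.length ≤ α.length := by
  induction β generalizing α s with
  | nil => exact Nat.zero_le _
  | cons w β ih =>
    obtain ⟨α', hα', hrun, hperm⟩ := hc.exists_perm_cons hα hst hβ.1
    have hlen := ih hα' (hrun ▸ hst) hβ.2
    simpa [← hperm.length_eq] using hlen

lemma LegalMovesCommute.applyMoves_eq {α β : List ι} {s : S} (hα : LegalRun move legal α s)
    (hst : IsStable legal (applyMoves move α s)) (hβ : LegalRun move legal β s)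
    (hstβ : IsStable legal (applyMoves move β s)) :
    applyMoves move β s = applyMoves move α s := by
  induction β generalizing α s with
  | nil =>
    cases α with
    | nil => rfl
    | cons z _ => exact absurd hα.1 (hstβ z)
  | cons w β ih =>
    obtain ⟨α', hα', hrun, -⟩ := hc.exists_perm_cons hα hst hβ.1
    rw [applyMoves_cons, ih hα' (hrun ▸ hst) hβ.2 hstβ, hrun]

end LegalMoves

def activateAt (w : ℤ) (p : ℤ × Bool) : ℤ × Bool :=
  if p.1 = w then (w, true) else p

lemma count_map_activateAt (w x : ℤ) (b : Bool) (M : Multiset (ℤ × Bool)) :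
    (M.map (activateAt w)).count (x, b) =
      if x = w then (if b then M.count (w, true) + M.count (w, false) else 0)
      else M.count (x, b) := by
  induction M using Multiset.induction_on with
  | empty => simp
  | cons p M ih =>
    obtain ⟨y, c⟩ := p
    by_cases hy : y = w
    · subst hy
      cases b <;> cases c <;> by_cases hx : x = y <;> simp_all [activateAt] <;> omega
    · simp only [Multiset.map_cons, Multiset.count_cons, ih, activateAt, hy, if_false]
      split_ifs <;> simp_all

lemma count_erase_mk_true (M : Multiset (ℤ × Bool)) (z x : ℤ) (b : Bool) :
    (M.erase (z, true)).count (x, b) = M.count (x, b) - if x = z ∧ b = true then 1 else 0 := by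
  split_ifs with h
  · obtain ⟨rfl, rfl⟩ := h
    exact Multiset.count_erase_self _ _
  · rw [Multiset.count_erase_of_ne (by simpa using h), Nat.sub_zero]

lemma mem_map_fst_iff_count_pos (z : ℤ) (M : Multiset (ℤ × Bool)) :
    z ∈ M.map Prod.fst ↔ 0 < M.count (z, true) + M.count (z, false) := by
  simp only [Multiset.mem_map, Nat.add_pos_iff_pos_or_pos, Multiset.count_pos]
  constructor
  · rintro ⟨⟨y, (_ | _)⟩, hp, rfl⟩ <;> simp [hp]
  · rintro (h | h) <;> exact ⟨_, h, rfl⟩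

structure UnlabelledState where
  cnt : ℤ → ℕ
  particles : Multiset (ℤ × Bool)

namespace UnlabelledState

def active (Q : UnlabelledState) (x : ℤ) : ℕ := Q.particles.count (x, true)

def passive (Q : UnlabelledState) (x : ℤ) : ℕ := Q.particles.count (x, false)

def HasActiveAt (z : ℤ) (Q : UnlabelledState) : Prop := 0 < Q.active z

lemma ext_active_passive {Q Q' : UnlabelledState} (hc : Q.cnt = Q'.cnt)
    (ha : Q.active = Q'.active) (hp : Q.passive = Q'.passive) : Q = Q' := by
  obtain ⟨c, M⟩ := Q
  obtain ⟨c', M'⟩ := Q'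
  congr
  refine Multiset.ext' fun ⟨x, b⟩ => ?_
  cases b
  · exact congrFun hp x
  · exact congrFun ha x

def topple (F : ℤ → ℕ → ℤ) (z : ℤ) (Q : UnlabelledState) : UnlabelledState where
  cnt := Function.update Q.cnt z (Q.cnt z + 1)
  particles :=
    let rest := Q.particles.erase (z, true)
    let i := F z (Q.cnt z)
    -- a sleep instruction is obeyed only by a particle alone at its site
    if i = 0 then (z, decide (z ∈ rest.map Prod.fst)) ::ₘ rest
    else ((z + i, true) ::ₘ rest).map (activateAt (z + i))

variable (F : ℤ → ℕ → ℤ) (Q : UnlabelledState)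

lemma cnt_topple (z : ℤ) : (Q.topple F z).cnt = Function.update Q.cnt z (Q.cnt z + 1) := rfl

lemma active_topple (z x : ℤ) : (Q.topple F z).active x =
    if F z (Q.cnt z) = 0 then
      if x = z then Q.active z - 1 + (if 0 < Q.active z - 1 + Q.passive z then 1 else 0)
      else Q.active x
    else if x = z + F z (Q.cnt z) then Q.active x + Q.passive x + 1
    else if x = z then Q.active x - 1 else Q.active x := by
  simp only [active, passive, topple]
  split_ifs <;>
    simp only [Multiset.count_cons, count_map_activateAt, count_erase_mk_true,
      mem_map_fst_iff_count_pos, Prod.mk.injEq, and_true, and_false, Bool.false_eq_true,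
      true_eq_decide_iff, if_false] <;>
    split_ifs <;> subst_vars <;> first | omega | simp_all

lemma passive_topple (z x : ℤ) : (Q.topple F z).passive x =
    if F z (Q.cnt z) = 0 then
      if x = z then Q.passive z + (if 0 < Q.active z - 1 + Q.passive z then 0 else 1)
      else Q.passive x
    else if x = z + F z (Q.cnt z) then 0 else Q.passive x := by
  simp only [active, passive, topple]
  split_ifs <;>
    simp only [Multiset.count_cons, count_map_activateAt, count_erase_mk_true,
      mem_map_fst_iff_count_pos, Prod.mk.injEq, and_true, and_false, Bool.false_eq_true,
      false_eq_decide_iff, if_false] <;>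
    split_ifs <;> subst_vars <;> first | omega | simp_all

lemma active_topple_pos_of_ne {z w : ℤ} (hzw : z ≠ w) (hz : 0 < Q.active z) :
    0 < (Q.topple F w).active z := by
  rw [active_topple]
  split_ifs <;> omega

lemma topple_comm {z w : ℤ} (hzw : z ≠ w) (hz : 0 < Q.active z) (hw : 0 < Q.active w) :
    (Q.topple F w).topple F z = (Q.topple F z).topple F w := by
  have hcz : (Q.topple F w).cnt z = Q.cnt z := Function.update_of_ne hzw ..
  have hcw : (Q.topple F z).cnt w = Q.cnt w := Function.update_of_ne hzw.symm ..
  refine ext_active_passive ?_ (funext fun x => ?_) (funext fun x => ?_)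
  · simp only [cnt_topple, hcz, hcw]
    exact Function.update_comm hzw.symm ..
  all_goals
    simp only [active_topple, passive_topple, hcz, hcw]
    split_ifs <;> subst_vars <;> omega

end UnlabelledState

open UnlabelledState in
lemma legalMovesCommute_topple (F : ℤ → ℕ → ℤ) :
    LegalMovesCommute (topple F) HasActiveAt :=
  fun _ _ Q hzw hz hw => ⟨Q.active_topple_pos_of_ne F hzw hz, Q.topple_comm F hzw hz hw⟩

lemma Finset.univ_val_map_erase {α β : Type*} [Fintype α] [DecidableEq α] [DecidableEq β]
    (g : α → β) (a : α) :
    (Finset.univ.val.map g).erase (g a) = (Finset.univ.erase a).val.map g := by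
  rw [Finset.erase_val, Multiset.map_erase_of_mem _ _ (Finset.mem_univ a)]

lemma Finset.univ_val_map_update {α β : Type*} [Fintype α] [DecidableEq α] [DecidableEq β]
    (g : α → β) (a : α) (b : β) :
    Finset.univ.val.map (Function.update g a b) = b ::ₘ (Finset.univ.val.map g).erase (g a) := by
  have hg : (Finset.univ.erase a).val.map (Function.update g a b) =
      (Finset.univ.erase a).val.map g :=
    Multiset.map_congr rfl fun k hk => Function.update_of_ne (Finset.ne_of_mem_erase hk) ..
  conv_lhs => rw [← Multiset.cons_erase (Finset.mem_univ_val a), ← Finset.erase_val]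
  rw [Multiset.map_cons, Function.update_self, hg, univ_val_map_erase]

namespace ARWState

variable {m : ℕ}

def particles (X : ARWState m) : Multiset (ℤ × Bool) :=
  Finset.univ.val.map fun k => (X.pos k, X.typ k)

def unlabel (X : ARWState m) : UnlabelledState :=
  ⟨X.cnt, X.particles⟩

variable (F : ℤ → ℕ → ℤ) {X : ARWState m} {n : Fin m}

lemma arwStep_of_passive (h : X.typ n = false) : arwStep F n X = X := by
  simp [arwStep, h]

lemma cnt_arwStep_of_active (h : X.typ n = true) :
    (arwStep F n X).cnt = Function.update X.cnt (X.pos n) (X.cnt (X.pos n) + 1) := by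
  funext w
  rw [Function.update_apply]
  by_cases hi : F (X.pos n) (X.cnt (X.pos n)) = 0 <;>
    split_ifs with hw <;> simp [arwStep, h, hi, hw]

lemma particles_arwStep_of_sleep (h : X.typ n = true)
    (hi : F (X.pos n) (X.cnt (X.pos n)) = 0) :
    (arwStep F n X).particles = (X.pos n, decide (∃ l, l ≠ n ∧ X.pos l = X.pos n)) ::ₘ
      X.particles.erase (X.pos n, true) := by
  have hupd := Finset.univ_val_map_update (fun k => (X.pos k, X.typ k)) n
    (X.pos n, decide (∃ l, l ≠ n ∧ X.pos l = X.pos n))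
  simp only [h] at hupd
  unfold particles
  rw [← hupd]
  congr 1
  funext k
  by_cases hk : k = n
  · subst hk; simp [arwStep, h, hi]
  · simp [arwStep, h, hi, hk]

lemma particles_arwStep_of_jump (h : X.typ n = true) (hi : F (X.pos n) (X.cnt (X.pos n)) ≠ 0) :
    (arwStep F n X).particles =
      ((X.pos n + F (X.pos n) (X.cnt (X.pos n)), true) ::ₘ X.particles.erase (X.pos n, true)).map
        (activateAt (X.pos n + F (X.pos n) (X.cnt (X.pos n)))) := by
  have hupd := Finset.univ_val_map_update (fun k => (X.pos k, X.typ k)) n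
    (X.pos n + F (X.pos n) (X.cnt (X.pos n)), true)
  simp only [h] at hupd
  unfold particles
  rw [← hupd, Multiset.map_map]
  congr 1
  funext k
  by_cases hk : k = n
  · subst hk; simp [arwStep, h, hi, activateAt]
  · simp only [Function.comp_apply, Function.update_of_ne hk, activateAt]
    split_ifs with hw <;> simp [arwStep, h, hi, hk, hw]

lemma unlabel_arwStep (h : X.typ n = true) :
    (arwStep F n X).unlabel = X.unlabel.topple F (X.pos n) := by
  have hrest : X.particles.erase (X.pos n, true) =
      (Finset.univ.erase n).val.map fun k => (X.pos k, X.typ k) := by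
    rw [particles, ← Finset.univ_val_map_erase, h]
  have hmem : X.pos n ∈ (X.particles.erase (X.pos n, true)).map Prod.fst ↔
      ∃ l, l ≠ n ∧ X.pos l = X.pos n := by
    simp [hrest, -Finset.erase_val, and_comm]
  by_cases hi : F (X.pos n) (X.cnt (X.pos n)) = 0
  · simp only [unlabel, UnlabelledState.topple, cnt_arwStep_of_active F h,
      particles_arwStep_of_sleep F h hi, hi, if_true, hmem]
  · simp only [unlabel, UnlabelledState.topple, cnt_arwStep_of_active F h,
      particles_arwStep_of_jump F h hi, hi, if_false]

lemma hasActiveAt_unlabel (h : X.typ n = true) :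
    X.unlabel.HasActiveAt (X.pos n) :=
  Multiset.count_pos.mpr (Multiset.mem_map.mpr ⟨n, Finset.mem_univ_val n, by rw [h]⟩)

lemma isStable_unlabel (h : ∀ n, X.typ n = false) :
    IsStable UnlabelledState.HasActiveAt X.unlabel := fun z hz => by
  have hmem : (z, true) ∈ X.particles := Multiset.count_pos.mp hz
  obtain ⟨k, -, hk⟩ := Multiset.mem_map.mp hmem
  simp [h k] at hk

end ARWState

lemma Nat.exists_forall_ge_eq_of_monotone_of_le {f : ℕ → ℕ} (hf : Monotone f) {L : ℕ}
    (hL : ∀ k, f k ≤ L) : ∃ K, ∀ k, K ≤ k → f k = f K := by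
  have hbdd : BddAbove (Set.range f) := ⟨L, Set.forall_mem_range.mpr hL⟩
  obtain ⟨K, hK⟩ := Nat.sSup_mem (Set.range_nonempty f) hbdd
  exact ⟨K, fun k hk => le_antisymm (hK ▸ le_csSup hbdd ⟨k, rfl⟩) (hf hk)⟩

section Trajectory

open ARWState UnlabelledState

variable {m : ℕ} (F : ℤ → ℕ → ℤ) (N : ℕ → Fin m) (X : ARWState m)

def activeSites : ℕ → List ℤ
  | 0 => []
  | k + 1 =>
    if (arwEvolve F N X k).typ (N k) then activeSites k ++ [(arwEvolve F N X k).pos (N k)]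
    else activeSites k

lemma legalRun_activeSites (k : ℕ) :
    LegalRun (topple F) HasActiveAt (activeSites F N X k) X.unlabel ∧
      applyMoves (topple F) (activeSites F N X k) X.unlabel = (arwEvolve F N X k).unlabel := by
  induction k with
  | zero => exact ⟨trivial, rfl⟩
  | succ k ih =>
    obtain ⟨hleg, hrun⟩ := ih
    cases h : (arwEvolve F N X k).typ (N k)
    · simp only [activeSites, arwEvolve, h, arwStep_of_passive F h]
      exact ⟨hleg, hrun⟩
    · simp only [activeSites, arwEvolve, h, if_true, applyMoves_append, hrun,
        unlabel_arwStep F h]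
      exact ⟨hleg.append_singleton (hrun ▸ hasActiveAt_unlabel h), rfl⟩

lemma activeSites_length_mono : Monotone fun k => (activeSites F N X k).length := by
  refine monotone_nat_of_le_succ fun k => ?_
  simp only [activeSites]
  split_ifs <;> simp

lemma exists_stabilizesAt_of_length_le (hN : FairSeq N) {L : ℕ}
    (hL : ∀ k, (activeSites F N X k).length ≤ L) : ∃ Y, StabilizesAt F N X Y := by
  obtain ⟨K, hK⟩ := Nat.exists_forall_ge_eq_of_monotone_of_le (activeSites_length_mono F N X) hL
  have hpassive : ∀ k, K ≤ k → (arwEvolve F N X k).typ (N k) = false := fun k hk => by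
    cases h : (arwEvolve F N X k).typ (N k)
    · rfl
    · have hlen := hK (k + 1) (hk.trans k.le_succ)
      simp only [activeSites, h, if_true, List.length_append, List.length_singleton,
        hK k hk] at hlen
      omega
  have hconst : ∀ k, K ≤ k → arwEvolve F N X k = arwEvolve F N X K := by
    intro k hk
    induction k, hk using Nat.le_induction with
    | base => rfl
    | succ k hk ih => rw [arwEvolve, arwStep_of_passive F (hpassive k hk), ih]
  refine ⟨arwEvolve F N X K, ⟨K, hconst⟩, fun n => ?_⟩
  obtain ⟨k, hk, rfl⟩ := hN n K
  rw [← hconst k hk]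
  exact hpassive k hk

lemma StabilizesAt.exists_legalRun {Y : ARWState m} (h : StabilizesAt F N X Y) :
    ∃ α, LegalRun (topple F) HasActiveAt α X.unlabel ∧
      applyMoves (topple F) α X.unlabel = Y.unlabel := by
  obtain ⟨⟨k, hk⟩, -⟩ := h
  exact ⟨activeSites F N X k, (legalRun_activeSites F N X k).1,
    (legalRun_activeSites F N X k).2.trans (by rw [hk k le_rfl])⟩

end Trajectory

theorem arw_commutativity_general {m : ℕ} (F : ℤ → ℕ → ℤ)
    (X Xf : ARWState m)
    (N : ℕ → Fin m) (hstab : StabilizesAt F N X Xf)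
    (N' : ℕ → Fin m) (hN' : FairSeq N') :
    ∃ Xf' : ARWState m, StabilizesAt F N' X Xf' ∧
      (∀ z, Xf'.cnt z = Xf.cnt z) ∧
      (∀ z, jumpCount F z (Xf'.cnt z) = jumpCount F z (Xf.cnt z)) ∧
      (Finset.univ.val.map (fun n => (Xf'.pos n, Xf'.typ n)) =
        Finset.univ.val.map (fun n => (Xf.pos n, Xf.typ n))) := by
  have hc := legalMovesCommute_topple F
  obtain ⟨α, hα, hαXf⟩ := hstab.exists_legalRun
  have hstα :
      IsStable UnlabelledState.HasActiveAt (applyMoves (UnlabelledState.topple F) α X.unlabel) :=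
    hαXf ▸ ARWState.isStable_unlabel hstab.2
  obtain ⟨Y, hY⟩ := exists_stabilizesAt_of_length_le F N' X hN' fun k =>
    hc.length_le hα hstα (legalRun_activeSites F N' X k).1
  obtain ⟨β, hβ, hβY⟩ := hY.exists_legalRun
  have hYXf : Y.unlabel = Xf.unlabel := by
    rw [← hβY, ← hαXf]
    exact hc.applyMoves_eq hα hstα hβ (hβY ▸ ARWState.isStable_unlabel hY.2)
  have hcntY : Y.cnt = Xf.cnt := congrArg UnlabelledState.cnt hYXf
  exact ⟨Y, hY, congrFun hcntY, fun z => by rw [hcntY], congrArg UnlabelledState.particles hYXf⟩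

/-- **Commutativity (abelian property).** If, starting from a state `X` with all counters
zero, the evolution under some label sequence `N` stabilizes at `Xf`, then the evolution
under any label sequence `N' ∈ 𝒩_m` also stabilizes, at a state with the same counters
`j_z` at every site `z` (hence the same total number of opened envelopes and the same
number `R_z` of opened jump instructions at every site) and the same multiset of
(position, type) pairs as `Xf`. -/
theorem arw_commutativity {m : ℕ} (F : ℤ → ℕ → ℤ) (hF : ValidEnvelopes F)
    (X Xf : ARWState m) (hcnt : ∀ z, X.cnt z = 0)
    (N : ℕ → Fin m) (hstab : StabilizesAt F N X Xf)
    (N' : ℕ → Fin m) (hN' : FairSeq N') :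
    ∃ Xf' : ARWState m, StabilizesAt F N' X Xf' ∧
      (∀ z, Xf'.cnt z = Xf.cnt z) ∧
      (∀ z, jumpCount F z (Xf'.cnt z) = jumpCount F z (Xf.cnt z)) ∧
      (Finset.univ.val.map (fun n => (Xf'.pos n, Xf'.typ n)) =
        Finset.univ.val.map (fun n => (Xf.pos n, Xf.typ n))) :=
  arw_commutativity_general F X Xf N hstab N' hN'
end

section
/- Duality (reversibility) identity for the geometric transition kernel: for every 0 < λ < 1 and all m⁺, m⁻, n⁺, n⁻ ∈ ℤ₊, π_λ(m⁺) π_λ(m⁻) q(n⁺, n⁻ | m⁺, m⁻) = π_λ(n⁺) π_λ(n⁻) q(m⁻, m⁺ | n⁻, n⁺). -/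
/-- The geometric distribution `π_λ(k) = (1 − λ) λ^k` on `ℤ₊`. -/
noncomputable def geomPmf (l : ℝ) (k : ℕ) : ℝ := (1 - l) * l ^ k

/-- The normalizing constant
`Z_{m⁺,m⁻} = Σ_{n⁺,n⁻ ≥ 0} λ^{n⁺+n⁻} 𝟙[n⁺ − n⁻ = m⁺ − m⁻]`. -/
noncomputable def Zpart (l : ℝ) (mp mm : ℕ) : ℝ :=
  ∑' p : ℕ × ℕ, if (p.1 : ℤ) - (p.2 : ℤ) = (mp : ℤ) - (mm : ℤ) then l ^ (p.1 + p.2) else 0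

/-- The transition probability
`q(n⁺, n⁻ | m⁺, m⁻) = Z_{m⁺,m⁻}^{−1} λ^{n⁺+n⁻} 𝟙[n⁺ − n⁻ = m⁺ − m⁻]`. -/
noncomputable def qker (l : ℝ) (np nm mp mm : ℕ) : ℝ :=
  (Zpart l mp mm)⁻¹ * l ^ (np + nm) *
    (if (np : ℤ) - (nm : ℤ) = (mp : ℤ) - (mm : ℤ) then 1 else 0)

/-!
The normalizing constant `Z_{m⁺,m⁻}` depends only on `m⁺ − m⁻`, and reindexing its sum by
`(n⁺, n⁻) ↦ (n⁻, n⁺)` shows `Z_{m⁺,m⁻} = Z_{m⁻,m⁺}`. Hence, when `n⁺ − n⁻ = m⁺ − m⁻`, both kernels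
share the constant `Z_{m⁺,m⁻} = Z_{n⁻,n⁺}` and both sides equal `(1 − λ)² λ^{m⁺+m⁻+n⁺+n⁻} / Z`;
otherwise both indicators vanish.
-/

lemma Zpart_congr (l : ℝ) {a b c d : ℕ} (h : (a : ℤ) - b = (c : ℤ) - d) :
    Zpart l a b = Zpart l c d := by
  simp only [Zpart, h]

lemma Zpart_comm (l : ℝ) (a b : ℕ) : Zpart l a b = Zpart l b a := by
  rw [Zpart, ← (Equiv.prodComm ℕ ℕ).tsum_eq, Zpart]
  refine tsum_congr fun p => ?_
  simp only [Equiv.prodComm_apply, Prod.fst_swap, Prod.snd_swap, Nat.add_comm p.2]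
  exact if_congr (by omega) rfl rfl

lemma qker_of_sub_eq (l : ℝ) {np nm mp mm : ℕ} (h : (np : ℤ) - nm = (mp : ℤ) - mm) :
    qker l np nm mp mm = (Zpart l mp mm)⁻¹ * l ^ (np + nm) := by
  rw [qker, if_pos h, mul_one]

lemma qker_of_sub_ne (l : ℝ) {np nm mp mm : ℕ} (h : (np : ℤ) - nm ≠ (mp : ℤ) - mm) :
    qker l np nm mp mm = 0 := by
  rw [qker, if_neg h, mul_zero]

theorem geometric_kernel_duality_general (l : ℝ)
    (mp mm np nm : ℕ) :
    geomPmf l mp * geomPmf l mm * qker l np nm mp mm =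
      geomPmf l np * geomPmf l nm * qker l mm mp nm np := by
  by_cases h : (np : ℤ) - nm = (mp : ℤ) - mm
  · have hZ : Zpart l mp mm = Zpart l nm np :=
      (Zpart_congr l h.symm).trans (Zpart_comm l np nm)
    rw [qker_of_sub_eq l h, qker_of_sub_eq l (by omega), hZ, geomPmf, geomPmf, geomPmf, geomPmf,
      pow_add, pow_add]
    ring
  · rw [qker_of_sub_ne l h, qker_of_sub_ne l (by omega), mul_zero, mul_zero]

/-- **Duality (reversibility) identity for the geometric transition kernel:**
`π_λ(m⁺) π_λ(m⁻) q(n⁺, n⁻ | m⁺, m⁻) = π_λ(n⁺) π_λ(n⁻) q(m⁻, m⁺ | n⁻, n⁺)`. -/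
theorem geometric_kernel_duality (l : ℝ) (hl0 : 0 < l) (hl1 : l < 1)
    (mp mm np nm : ℕ) :
    geomPmf l mp * geomPmf l mm * qker l np nm mp mm =
      geomPmf l np * geomPmf l nm * qker l mm mp nm np :=
  geometric_kernel_duality_general l mp mm np nm
end

section
/- Reversibility for exponential weights: let α₁, α₂ > 0 and let μ be the product probability measure on [0,∞)³ of the exponential distributions with rates α₁, α₂ and α₁ + α₂ (densities α e^{−αx}). Then the pushforward of μ under the map R(r,s,t) = (t + (r−s)⁺, t + (s−r)⁺, min(r,s)) equals μ, i.e. R_*μ = μ. -/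
/-!
On the nonnegative orthant the product density is a constant times
`exp (-(α₁ r + α₂ s + (α₁ + α₂) t))`, and it vanishes off the orthant. Since
`(r - s)⁺ + min r s = r` and `(s - r)⁺ + min r s = s`, the map `R` preserves both the orthant and
this linear form, so the density is `R`-invariant. Moreover `R` preserves Lebesgue measure: on each
of the half-spaces `{s < r}` and `{r ≤ s}`, which it maps to themselves, it agrees with an affine
map of determinant `±1`. An `R`-invariant density against an `R`-invariant measure is pushed
forward to itself.
-/

open MeasureTheory

/-- The exponential distribution with rate `α`: the measure on `ℝ` with density
`α e^{−αx}` on `[0,∞)` and zero on `(−∞,0)`. -/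
noncomputable def expMeasure (α : ℝ) : Measure ℝ :=
  volume.withDensity (fun x => ENNReal.ofReal (if 0 ≤ x then α * Real.exp (-α * x) else 0))

/-- The map `R(r,s,t) = (t + (r−s)⁺, t + (s−r)⁺, min(r,s))`. -/
noncomputable def Rmap (p : ℝ × ℝ × ℝ) : ℝ × ℝ × ℝ :=
  (p.2.2 + max (p.1 - p.2.1) 0, p.2.2 + max (p.2.1 - p.1) 0, min p.1 p.2.1)

open Set ENNReal

namespace MeasureTheory

section MeasurePreserving

variable {α : Type*} [MeasurableSpace α] {μ : Measure α}

theorem MeasurePreserving.piecewise_of_preimage_eq {U : Set α} [DecidablePred (· ∈ U)]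
    (hU : MeasurableSet U) {g h : α → α} (hg : MeasurePreserving g μ μ)
    (hh : MeasurePreserving h μ μ) (hgU : g ⁻¹' U = U) (hhU : h ⁻¹' U = U) :
    MeasurePreserving (U.piecewise g h) μ μ := by
  have hm : Measurable (U.piecewise g h) := hg.measurable.piecewise hU hh.measurable
  refine ⟨hm, Measure.ext fun s hs => ?_⟩
  have hsplit : U.piecewise g h ⁻¹' s = g ⁻¹' (s ∩ U) ∪ h ⁻¹' (s \ U) := by
    rw [preimage_inter, preimage_sdiff, hgU, hhU]
    ext x
    by_cases hx : x ∈ U <;> simp [hx]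
  have hdisj : Disjoint (g ⁻¹' (s ∩ U)) (h ⁻¹' (s \ U)) := by
    rw [preimage_inter, preimage_sdiff, hgU, hhU]
    exact disjoint_sdiff_right.mono_left inter_subset_right
  rw [Measure.map_apply hm hs, hsplit, measure_union hdisj (hh.measurable (hs.diff hU)),
    hg.measure_preimage (hs.inter hU).nullMeasurableSet,
    hh.measure_preimage (hs.diff hU).nullMeasurableSet, measure_inter_add_sdiff s hU]

theorem MeasurePreserving.map_withDensity_comp {β : Type*} [MeasurableSpace β] {ν : Measure β}
    {f : α → β} (hf : MeasurePreserving f μ ν) {F : β → ℝ≥0∞} (hF : Measurable F) :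
    (μ.withDensity (F ∘ f)).map f = ν.withDensity F := by
  ext s hs
  rw [Measure.map_apply hf.measurable hs, withDensity_apply _ (hf.measurable hs),
    withDensity_apply _ hs]
  exact hf.setLIntegral_comp_preimage hs hF

end MeasurePreserving

theorem measurePreserving_add_prod_skew {G β : Type*} [MeasurableSpace G] [Add G]
    [MeasurableAdd₂ G] (μ : Measure G) [μ.IsAddRightInvariant] [SFinite μ] [MeasurableSpace β]
    {ν : Measure β} [SFinite ν] {e : β → β} (he : MeasurePreserving e ν ν) {φ : β → G}
    (hφ : Measurable φ) :
    MeasurePreserving (fun p : G × β => (p.1 + φ p.2, e p.2)) (μ.prod ν) (μ.prod ν) := by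
  have hskew : MeasurePreserving (fun q : β × G => (e q.1, q.2 + φ q.1)) (ν.prod μ) (ν.prod μ) :=
    he.skew_product (g := fun y x => x + φ y) (measurable_snd.add (hφ.comp measurable_fst))
      (ae_of_all _ fun y => map_add_right_eq_self μ (φ y))
  exact Measure.measurePreserving_swap.comp (hskew.comp Measure.measurePreserving_swap)

theorem measurePreserving_swap_left_prod {α β γ : Type*} [MeasurableSpace α] [MeasurableSpace β]
    [MeasurableSpace γ] (μa : Measure α) (μb : Measure β) (μc : Measure γ) [SFinite μa]
    [SFinite μb] [SFinite μc] :
    MeasurePreserving (fun p : α × β × γ => (p.2.1, p.1, p.2.2))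
      (μa.prod (μb.prod μc)) (μb.prod (μa.prod μc)) :=
  (measurePreserving_prodAssoc μb μa μc).comp
    ((Measure.measurePreserving_swap.prod (MeasurePreserving.id μc)).comp
      (measurePreserving_prodAssoc μa μb μc).symm)

end MeasureTheory

theorem Rmap_of_le {p : ℝ × ℝ × ℝ} (h : p.2.1 ≤ p.1) :
    Rmap p = (p.1 + (p.2.2 - p.2.1), p.2.2, p.2.1) := by
  simp only [Rmap, max_eq_left (sub_nonneg.2 h), max_eq_right (sub_nonpos.2 h), min_eq_right h,
    add_zero]
  exact Prod.ext (by ring) rfl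

theorem Rmap_of_ge {p : ℝ × ℝ × ℝ} (h : p.1 ≤ p.2.1) :
    Rmap p = (p.2.2, p.2.1 + (p.2.2 - p.1), p.1) := by
  simp only [Rmap, max_eq_left (sub_nonneg.2 h), max_eq_right (sub_nonpos.2 h), min_eq_left h,
    add_zero]
  exact Prod.ext rfl (Prod.ext (by ring) rfl)

theorem Rmap_eq_piecewise :
    Rmap = {p : ℝ × ℝ × ℝ | p.2.1 < p.1}.piecewise
      (fun p => (p.1 + (p.2.2 - p.2.1), p.2.2, p.2.1))
      (fun p => (p.2.2, p.2.1 + (p.2.2 - p.1), p.1)) := by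
  ext1 p
  by_cases h : p.2.1 < p.1
  · rw [Rmap_of_le h.le, piecewise_eq_of_mem _ _ _ (show p ∈ {p | p.2.1 < p.1} from h)]
  · rw [Rmap_of_ge (not_lt.1 h), piecewise_eq_of_notMem _ _ _ (show p ∉ {p | p.2.1 < p.1} from h)]

theorem measurePreserving_Rmap : MeasurePreserving Rmap volume volume := by
  -- on `{s < r}`, `R` is the shear `r ↦ r + (t - s)` followed by swapping `s` and `t`;
  -- on `{r ≤ s}` it is that map conjugated by swapping `r` and `s`
  have hA := measurePreserving_add_prod_skew (volume : Measure ℝ)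
    (Measure.measurePreserving_swap (μ := (volume : Measure ℝ)) (ν := volume))
    (φ := fun q : ℝ × ℝ => q.2 - q.1) (by fun_prop)
  have hσ := measurePreserving_swap_left_prod (volume : Measure ℝ) (volume : Measure ℝ)
    (volume : Measure ℝ)
  rw [Rmap_eq_piecewise]
  refine MeasurePreserving.piecewise_of_preimage_eq
    (measurableSet_lt (by fun_prop) (by fun_prop)) hA ((hσ.comp hA).comp hσ) ?_ ?_
  all_goals
    ext p
    simp only [mem_preimage, mem_ofPred_eq]
    exact ⟨fun h => by linarith, fun h => by linarith⟩

theorem Rmap_nonneg_iff {p : ℝ × ℝ × ℝ} : 0 ≤ Rmap p ↔ 0 ≤ p := by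
  obtain ⟨r, s, t⟩ := p
  rcases le_total r s with h | h <;>
    simp only [Rmap_of_ge, Rmap_of_le, h, Prod.le_def, Prod.fst_zero, Prod.snd_zero] <;>
    exact ⟨fun ⟨_, _, _⟩ => ⟨by linarith, by linarith, by linarith⟩,
      fun ⟨_, _, _⟩ => ⟨by linarith, by linarith, by linarith⟩⟩

theorem Rmap_weighted_sum (a b : ℝ) (p : ℝ × ℝ × ℝ) :
    a * (Rmap p).1 + b * (Rmap p).2.1 + (a + b) * (Rmap p).2.2 =
      a * p.1 + b * p.2.1 + (a + b) * p.2.2 := by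
  rcases le_total p.1 p.2.1 with h | h
  · rw [Rmap_of_ge h]
    ring
  · rw [Rmap_of_le h]
    ring

noncomputable def expDensity (α x : ℝ) : ℝ≥0∞ :=
  ENNReal.ofReal (if 0 ≤ x then α * Real.exp (-α * x) else 0)

theorem expMeasure_eq_withDensity (α : ℝ) :
    expMeasure α = volume.withDensity (expDensity α) :=
  rfl

@[fun_prop]
theorem measurable_expDensity (α : ℝ) : Measurable (expDensity α) :=
  (Measurable.ite measurableSet_Ici (by fun_prop) measurable_const).ennreal_ofReal

noncomputable def expDensity₃ (α₁ α₂ α₃ : ℝ) (p : ℝ × ℝ × ℝ) : ℝ≥0∞ :=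
  expDensity α₁ p.1 * (expDensity α₂ p.2.1 * expDensity α₃ p.2.2)

theorem measurable_expDensity₃ (α₁ α₂ α₃ : ℝ) : Measurable (expDensity₃ α₁ α₂ α₃) := by
  unfold expDensity₃
  fun_prop

theorem prod_expMeasure (α₁ α₂ α₃ : ℝ) :
    (expMeasure α₁).prod ((expMeasure α₂).prod (expMeasure α₃)) =
      volume.withDensity (expDensity₃ α₁ α₂ α₃) := by
  simp only [expMeasure_eq_withDensity]
  rw [prod_withDensity (measurable_expDensity _) (measurable_expDensity _),
    prod_withDensity (measurable_expDensity _) (by fun_prop)]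
  rfl

theorem expDensity₃_eq (α₁ α₂ α₃ : ℝ) (p : ℝ × ℝ × ℝ) :
    expDensity₃ α₁ α₂ α₃ p = if 0 ≤ p then
      ENNReal.ofReal α₁ * ENNReal.ofReal α₂ * ENNReal.ofReal α₃ *
        ENNReal.ofReal (Real.exp (-(α₁ * p.1 + α₂ * p.2.1 + α₃ * p.2.2))) else 0 := by
  obtain ⟨r, s, t⟩ := p
  simp only [expDensity₃, expDensity, Prod.le_def, Prod.fst_zero, Prod.snd_zero]
  by_cases hr : 0 ≤ r <;> by_cases hs : 0 ≤ s <;> by_cases ht : 0 ≤ t <;>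
    simp only [hr, hs, ht, if_true, if_false, and_true, and_false, ENNReal.ofReal_zero, mul_zero,
      zero_mul]
  rw [ENNReal.ofReal_mul' (Real.exp_pos _).le, ENNReal.ofReal_mul' (Real.exp_pos _).le,
    ENNReal.ofReal_mul' (Real.exp_pos _).le, neg_add, neg_add, Real.exp_add, Real.exp_add,
    ENNReal.ofReal_mul (by positivity), ENNReal.ofReal_mul (by positivity)]
  simp only [neg_mul]
  ring

theorem expDensity₃_comp_Rmap (α₁ α₂ : ℝ) :
    expDensity₃ α₁ α₂ (α₁ + α₂) ∘ Rmap = expDensity₃ α₁ α₂ (α₁ + α₂) := by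
  ext1 p
  simp only [Function.comp_apply, expDensity₃_eq, Rmap_nonneg_iff, Rmap_weighted_sum]

theorem exponential_reversibility_general (α₁ α₂ : ℝ) :
    Measure.map Rmap
        ((expMeasure α₁).prod ((expMeasure α₂).prod (expMeasure (α₁ + α₂)))) =
      (expMeasure α₁).prod ((expMeasure α₂).prod (expMeasure (α₁ + α₂))) := by
  rw [prod_expMeasure]
  simpa only [expDensity₃_comp_Rmap] using
    measurePreserving_Rmap.map_withDensity_comp (measurable_expDensity₃ α₁ α₂ (α₁ + α₂))

/-- **Reversibility for exponential weights:** if `μ` is the product of exponential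
distributions with rates `α₁`, `α₂` and `α₁ + α₂`, then `R_* μ = μ`. -/
theorem exponential_reversibility (α₁ α₂ : ℝ) (h₁ : 0 < α₁) (h₂ : 0 < α₂) :
    Measure.map Rmap
        ((expMeasure α₁).prod ((expMeasure α₂).prod (expMeasure (α₁ + α₂)))) =
      (expMeasure α₁).prod ((expMeasure α₂).prod (expMeasure (α₁ + α₂))) :=
  exponential_reversibility_general α₁ α₂
end

section
/- Reversibility for geometric weights: let λ₁, λ₂ ∈ (0,1) and let μ be the product probability measure on ℤ₊³ of the geometric distributions Geom(λ₁), Geom(λ₂) and Geom(λ₁λ₂). Then the pushforward of μ under the map R(r,s,t) = (t + (r−s)⁺, t + (s−r)⁺, min(r,s)) (restricted to ℤ₊³) equals μ, i.e. R_*μ = μ. -/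
/-!
`R` is an involution of the countable space `ℕ³`, so `R_* μ = μ` amounts to `μ {R p} = μ {p}`
for every point `p`. The mass of `(r, s, t)` is a constant times `λ₁ ^ (r + t) λ₂ ^ (s + t)` because
`(λ₁λ₂) ^ t = λ₁ ^ t λ₂ ^ t`, and `R` preserves both `r + t` and `s + t`.
-/

open MeasureTheory

/-- The geometric distribution with parameter `λ`: the measure on `ℤ₊ = ℕ` assigning
mass `(1 − λ) λ^k` to `k`. -/
noncomputable def geomMeasure (l : ℝ) : Measure ℕ :=
  Measure.sum (fun k : ℕ => (ENNReal.ofReal ((1 - l) * l ^ k)) • Measure.dirac k)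

/-- The map `R(r,s,t) = (t + (r−s)⁺, t + (s−r)⁺, min(r,s))` on `ℤ₊³`
(truncated subtraction on `ℕ` realizes the positive part). -/
def RmapN (p : ℕ × ℕ × ℕ) : ℕ × ℕ × ℕ :=
  (p.2.2 + (p.1 - p.2.1), p.2.2 + (p.2.1 - p.1), min p.1 p.2.1)

theorem MeasureTheory.Measure.map_eq_self_of_involutive {α : Type*} [MeasurableSpace α]
    [MeasurableSingletonClass α] [Countable α] {μ : Measure α} {f : α → α}
    (hf : Function.Involutive f) (hμ : ∀ a, μ {f a} = μ {a}) : μ.map f = μ := by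
  refine Measure.ext_of_singleton fun a => ?_
  rw [Measure.map_apply (measurable_of_countable f) (measurableSet_singleton a),
    ← hf.image_eq_preimage_symm, Set.image_singleton, hμ]

theorem MeasureTheory.Measure.prod_prod_singleton {α β γ : Type*} [MeasurableSpace α]
    [MeasurableSpace β] [MeasurableSpace γ] (μ : Measure α) (ν : Measure β) (ρ : Measure γ)
    [SFinite ν] [SFinite ρ] (a : α) (b : β) (c : γ) :
    μ.prod (ν.prod ρ) {(a, b, c)} = μ {a} * (ν {b} * ρ {c}) := by
  rw [← Set.singleton_prod_singleton, ← Set.singleton_prod_singleton, Measure.prod_prod,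
    Measure.prod_prod]

theorem RmapN_involutive : Function.Involutive RmapN := by
  rintro ⟨r, s, t⟩
  simp only [RmapN, Prod.mk.injEq]
  omega

theorem RmapN_fst_add_snd_snd (p : ℕ × ℕ × ℕ) : (RmapN p).1 + (RmapN p).2.2 = p.1 + p.2.2 := by
  simp only [RmapN]
  omega

theorem RmapN_snd_fst_add_snd_snd (p : ℕ × ℕ × ℕ) : (RmapN p).2.1 + (RmapN p).2.2 = p.2.1 + p.2.2 := by
  simp only [RmapN]
  omega

instance (l : ℝ) : SFinite (geomMeasure l) := by
  unfold geomMeasure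
  infer_instance

theorem geomMeasure_singleton {l : ℝ} (hl : 0 ≤ l) (n : ℕ) :
    geomMeasure l {n} = ENNReal.ofReal (1 - l) * ENNReal.ofReal l ^ n := by
  rw [geomMeasure, Measure.sum_apply _ (measurableSet_singleton n), tsum_eq_single n]
  · simp [ENNReal.ofReal_mul' (pow_nonneg hl n), ENNReal.ofReal_pow hl]
  · intro k hk
    simp [Measure.dirac_apply', hk]

theorem geomMeasure_prod_singleton {l₁ l₂ : ℝ} (h₁ : 0 ≤ l₁) (h₂ : 0 ≤ l₂) (p : ℕ × ℕ × ℕ) :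
    (geomMeasure l₁).prod ((geomMeasure l₂).prod (geomMeasure (l₁ * l₂))) {p} =
      ENNReal.ofReal (1 - l₁) * ENNReal.ofReal (1 - l₂) * ENNReal.ofReal (1 - l₁ * l₂) *
        ENNReal.ofReal l₁ ^ (p.1 + p.2.2) * ENNReal.ofReal l₂ ^ (p.2.1 + p.2.2) := by
  obtain ⟨r, s, t⟩ := p
  rw [Measure.prod_prod_singleton, geomMeasure_singleton h₁, geomMeasure_singleton h₂,
    geomMeasure_singleton (mul_nonneg h₁ h₂), ENNReal.ofReal_mul h₁]
  ring

/-- **Reversibility for geometric weights:** if `μ` is the product of geometric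
distributions with parameters `λ₁`, `λ₂` and `λ₁λ₂`, then `R_* μ = μ`. -/
theorem geometric_reversibility (l₁ l₂ : ℝ) (h₁ : l₁ ∈ Set.Ioo (0:ℝ) 1)
    (h₂ : l₂ ∈ Set.Ioo (0:ℝ) 1) :
    Measure.map RmapN
        ((geomMeasure l₁).prod ((geomMeasure l₂).prod (geomMeasure (l₁ * l₂)))) =
      (geomMeasure l₁).prod ((geomMeasure l₂).prod (geomMeasure (l₁ * l₂))) := by
  refine Measure.map_eq_self_of_involutive RmapN_involutive fun p => ?_
  rw [geomMeasure_prod_singleton h₁.1.le h₂.1.le, geomMeasure_prod_singleton h₁.1.le h₂.1.le,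
    RmapN_fst_add_snd_snd, RmapN_snd_fst_add_snd_snd]
end

section
/- Disjoint domains force disjoint time ranges: let S be a rectangular domain and ℓ, ℓ' ∈ C(S). If D(ℓ) ∩ D(ℓ') = ∅ then I(ℓ) ∩ I(ℓ') = ∅. -/
/-! Common definitions for the broken line process on the even sublattice
`Z̃² = {(t,x) ∈ ℤ² : t + x even}`. A point is a pair `(t, x)`. -/

/-- A point `(t, x)` of `ℤ²`. -/
abbrev BLPt := ℤ × ℤ

/-- An edge between diagonal nearest neighbors, encoded by its endpoint of smaller
`x`-coordinate together with a direction: `(y, true)` is the edge from `y = (t,x)` to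
`(t+1, x+1)`, and `(y, false)` is the edge from `y` to `(t−1, x+1)`. -/
abbrev BLEdge := BLPt × Bool

namespace BL

/-- The endpoint of an edge with smaller `x`-coordinate. -/
def fstPt (e : BLEdge) : BLPt := e.1

/-- The endpoint of an edge with larger `x`-coordinate. -/
def sndPt (e : BLEdge) : BLPt := (e.1.1 + (if e.2 then 1 else -1), e.1.2 + 1)

/-- The edge `e_y^NE` from `y = (t,x)` to `(t+1, x+1)`. -/
def eNE (y : BLPt) : BLEdge := (y, true)

/-- The edge `e_y^NW` from `y = (t,x)` to `(t−1, x+1)`. -/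
def eNW (y : BLPt) : BLEdge := (y, false)

/-- The edge `e_y^SE` from `y = (t,x)` to `(t+1, x−1)`. -/
def eSE (y : BLPt) : BLEdge := ((y.1 + 1, y.2 - 1), false)

/-- The edge `e_y^SW` from `y = (t,x)` to `(t−1, x−1)`. -/
def eSW (y : BLPt) : BLEdge := ((y.1 - 1, y.2 - 1), true)

/-- A rectangular domain: a nonempty set of the form
`{(t,x) ∈ Z̃² : a ≤ x + t ≤ b, c ≤ x − t ≤ d}`. -/
def IsRectDomain (S : Set BLPt) : Prop :=
  S.Nonempty ∧ ∃ a b c d : ℤ,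
    S = {y | (y.1 + y.2) % 2 = 0 ∧
      a ≤ y.2 + y.1 ∧ y.2 + y.1 ≤ b ∧ c ≤ y.2 - y.1 ∧ y.2 - y.1 ≤ d}

/-- `S̄`: the union of `S` with all points at Euclidean distance `√2` from a point
of `S` (i.e. diagonal nearest neighbors of points of `S`). -/
def bar (S : Set BLPt) : Set BLPt :=
  S ∪ {y | ∃ y' ∈ S, (y.1 - y'.1) ^ 2 = 1 ∧ (y.2 - y'.2) ^ 2 = 1}

/-- `∂S̄ = S̄ \ S`. -/
def bdry (S : Set BLPt) : Set BLPt := bar S \ S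

/-- `ℰ(S̄)`: the edges with at least one endpoint in `S`. -/
def edgeSet (S : Set BLPt) : Set BLEdge := {e | fstPt e ∈ S ∨ sndPt e ∈ S}

/-- A flow field on `ℰ(S̄)`: nonnegative on `ℰ(S̄)` and conservative at every `y ∈ S`:
`η(e_y^SW) + η(e_y^SE) = η(e_y^NW) + η(e_y^NE)`. -/
def IsFlowField (S : Set BLPt) (η : BLEdge → ℝ) : Prop :=
  (∀ e ∈ edgeSet S, 0 ≤ η e) ∧
  ∀ y ∈ S, η (eSW y) + η (eSE y) = η (eNW y) + η (eNE y)

/-- A broken trace `(y₀, e₁, y₁, …, e_n, y_n)`, `n ≥ 1`, encoded by its list of points: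
all points lie in `Z̃²`, and consecutive points satisfy `x_{i} = x_{i−1} + 1`,
`t_i = t_{i−1} ± 1` (the edges are then determined). -/
def IsBrokenTrace (l : List BLPt) : Prop :=
  2 ≤ l.length ∧ (∀ y ∈ l, (y.1 + y.2) % 2 = 0) ∧
  ∀ i : ℕ, ∀ h : i + 1 < l.length,
    (l[i + 1]'h).2 = (l[i]'(Nat.lt_of_succ_lt h)).2 + 1 ∧
    ((l[i + 1]'h).1 = (l[i]'(Nat.lt_of_succ_lt h)).1 + 1 ∨
      (l[i + 1]'h).1 = (l[i]'(Nat.lt_of_succ_lt h)).1 - 1)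

/-- The list of edges `e₁, …, e_n` of a broken trace. -/
def traceEdges (l : List BLPt) : List BLEdge :=
  List.zipWith (fun y y' => ((y, y'.1 == y.1 + 1) : BLEdge)) l l.tail

/-- `ℓ ⊆ S̄`: a broken trace all of whose edges lie in `ℰ(S̄)`. -/
def InBar (S : Set BLPt) (l : List BLPt) : Prop :=
  IsBrokenTrace l ∧ ∀ e ∈ traceEdges l, e ∈ edgeSet S

/-- `ℓ` crosses `S`: `ℓ ⊆ S̄` and its two extremal points lie in `∂S̄`.
`C(S)` is the set of broken traces crossing `S`. -/
def Crosses (S : Set BLPt) (l : List BLPt) : Prop :=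
  InBar S l ∧ (∃ y ∈ bdry S, l.head? = some y) ∧ (∃ y ∈ bdry S, l.getLast? = some y)

/-- `ℓ ⪰ ℓ'` (`ℓ` is to the right of `ℓ'`): `t(x) ≥ t'(x)` for every
`x ∈ D(ℓ) ∩ D(ℓ')`, and `t(x) ≥ t'(x')` for some `x ∈ D(ℓ)`, `x' ∈ D(ℓ')`. -/
def RightOf (l l' : List BLPt) : Prop :=
  (∀ y ∈ l, ∀ y' ∈ l', y.2 = y'.2 → y'.1 ≤ y.1) ∧
  ∃ y ∈ l, ∃ y' ∈ l', y'.1 ≤ y.1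

/-- The birth `ξ_y = min(η(e_y^NE), η(e_y^SE))` of a flow field at `y`. -/
noncomputable def xi (η : BLEdge → ℝ) (y : BLPt) : ℝ := min (η (eNE y)) (η (eSE y))

/-- Association of atoms `(e₁,p₁) ∼ (e₂,p₂)` at a vertex `y ∈ S` (Cases 1–4). -/
def Assoc (S : Set BLPt) (η : BLEdge → ℝ) (e₁ : BLEdge) (p₁ : ℝ) (e₂ : BLEdge) (p₂ : ℝ) :
    Prop :=
  ∃ y ∈ S,
    (e₁ = eSW y ∧ e₂ = eNW y ∧ 0 < p₁ ∧ p₁ ≤ min (η e₁) (η e₂) ∧ p₂ = p₁) ∨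
    (e₁ = eSE y ∧ e₂ = eNW y ∧ η (eSW y) < p₂ ∧ p₂ ≤ η e₂ ∧ p₁ = p₂ - η (eSW y)) ∨
    (e₁ = eSW y ∧ e₂ = eNE y ∧ η (eNW y) < p₁ ∧ p₁ ≤ η e₁ ∧ p₂ = p₁ - η (eNW y)) ∨
    (e₁ = eSE y ∧ e₂ = eNE y ∧ η e₁ - xi η y < p₁ ∧ p₁ ≤ η e₁ ∧
      η e₂ - xi η y < p₂ ∧ p₂ ≤ η e₂ ∧ η e₁ - p₁ = η e₂ - p₂)

/-- A chain of associated atoms along a list of edges: `ps i` is an atom of the `i`-th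
edge and consecutive atoms are associated. -/
def IsChain (S : Set BLPt) (η : BLEdge → ℝ) (es : List BLEdge) (ps : ℕ → ℝ) : Prop :=
  (∀ i : ℕ, ∀ h : i < es.length, 0 < ps i ∧ ps i ≤ η (es[i]'h)) ∧
  ∀ i : ℕ, ∀ h : i + 1 < es.length,
    Assoc S η (es[i]'(Nat.lt_of_succ_lt h)) (ps i) (es[i + 1]'h) (ps (i + 1))

/-- The set of atoms of the `i`-th edge of `ℓ` that participate in some chain of
associated atoms along `ℓ`. -/
def chainPosSet (S : Set BLPt) (η : BLEdge → ℝ) (l : List BLPt) (i : ℕ) : Set ℝ :=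
  {p | ∃ ps : ℕ → ℝ, IsChain S η (traceEdges l) ps ∧ ps i = p}

/-- The weight `w_η(ℓ)` of a broken trace: the common length of the maximal intervals
of atoms participating in chains along `ℓ` (and `0` if there is no such chain). -/
noncomputable def weight (S : Set BLPt) (η : BLEdge → ℝ) (l : List BLPt) : ℝ := by
  classical
  exact if (chainPosSet S η l 0).Nonempty then
      sSup (chainPosSet S η l 0) - sInf (chainPosSet S η l 0)
    else 0

end BL

/-!
Domains of broken traces are integer intervals, so disjoint domains put one trace, say `ℓ`,
strictly to the left of the other. In the light-cone coordinates `u = x + t`, `v = x − t` a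
rectangular domain consists of the points of `Z̃²` in a box `[a, b] × [c, d]`, and `u` and `v` are
nondecreasing along a broken trace. A crossing trace therefore enters the box through the side
`u = a` or `v = c` and leaves it through `u = b` or `v = d`. Since the exit point of `ℓ` cannot
dominate the entry point of `ℓ'` in both coordinates, either `ℓ` leaves through `u = b` and `ℓ'`
enters through `u = a`, or `ℓ` leaves through `v = d` and `ℓ'` enters through `v = c`; then
`2t = u − v` separates the traces, `ℓ` lying entirely later, resp. earlier, than `ℓ'`. In the
extreme configuration the separation is strict only because `u` and `v` are even on `Z̃²`.
-/
namespace BL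

def uv (y : BLPt) : ℤ × ℤ := (y.2 + y.1, y.2 - y.1)

def rectDomain (a b c d : ℤ) : Set BLPt :=
  {y | (y.1 + y.2) % 2 = 0 ∧ (a, c) ≤ uv y ∧ uv y ≤ (b, d)}

theorem IsRectDomain.exists_eq_rectDomain {S : Set BLPt} (hS : IsRectDomain S) :
    ∃ a b c d, S = rectDomain a b c d := by
  obtain ⟨-, a, b, c, d, rfl⟩ := hS
  refine ⟨a, b, c, d, ?_⟩
  ext y
  simp only [rectDomain, uv, Set.mem_ofPred_eq, Prod.mk_le_mk]
  tauto

def IsStep (y y' : BLPt) : Prop := y'.2 = y.2 + 1 ∧ (y'.1 = y.1 + 1 ∨ y'.1 = y.1 - 1)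

theorem IsStep.uv_le {y y' : BLPt} (h : IsStep y y') : uv y ≤ uv y' := by
  obtain ⟨hx, ht | ht⟩ := h <;> simp only [uv, Prod.mk_le_mk] <;> omega

theorem IsStep.sndPt_eq {y y' : BLPt} (h : IsStep y y') : sndPt (y, y'.1 == y.1 + 1) = y' := by
  obtain ⟨hx, ht | ht⟩ := h
  · have hb : (y'.1 == y.1 + 1) = true := by simp [ht]
    simp only [sndPt, hb, if_true]
    ext <;> simp only <;> omega
  · have hb : (y'.1 == y.1 + 1) = false := by simp only [beq_eq_false_iff_ne]; omega
    simp only [sndPt, hb, Bool.false_eq_true, if_false]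
    ext <;> simp only <;> omega

theorem IsBrokenTrace.isChain {l : List BLPt} (h : IsBrokenTrace l) : l.IsChain IsStep :=
  List.isChain_iff_getElem.2 h.2.2

theorem IsBrokenTrace.ne_nil {l : List BLPt} (h : IsBrokenTrace l) : l ≠ [] :=
  List.ne_nil_of_length_pos (by linarith [h.1])

section Chain

variable {l : List BLPt}

theorem uv_head_le (h : l.IsChain IsStep) {H : BLPt} (hH : l.head? = some H) :
    ∀ y ∈ l, uv H ≤ uv y :=
  h.induction _ l (fun _ _ hs hle => hle.trans hs.uv_le) fun hne => by
    rw [List.head?_eq_some_head hne, Option.some_inj] at hH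
    exact hH ▸ le_rfl

theorem uv_le_getLast (h : l.IsChain IsStep) {P : BLPt} (hP : l.getLast? = some P) :
    ∀ y ∈ l, uv y ≤ uv P :=
  h.backwards_induction _ l (fun _ _ hs hle => hs.uv_le.trans hle) fun hne => by
    rw [List.getLast?_eq_some_getLast hne, Option.some_inj] at hP
    exact hP ▸ le_rfl

theorem exists_snd_eq_iff {H : BLPt} (h : (H :: l).IsChain IsStep) (x : ℤ) :
    (∃ y ∈ H :: l, y.2 = x) ↔ H.2 ≤ x ∧ x ≤ H.2 + l.length := by
  induction l generalizing H with
  | nil => simp only [List.mem_singleton, exists_eq_left, List.length_nil]; omega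
  | cons z l ih =>
    obtain ⟨⟨hx, -⟩, hchain⟩ := List.isChain_cons_cons.1 h
    rw [List.exists_mem_cons_iff, ih hchain, List.length_cons]
    omega

theorem snd_lt_or_gt_of_disjoint {l' : List BLPt} (hl : l.IsChain IsStep) (hne : l ≠ [])
    (hl' : l'.IsChain IsStep) (hne' : l' ≠ []) (hD : ∀ y ∈ l, ∀ y' ∈ l', y.2 ≠ y'.2) :
    (∀ y ∈ l, ∀ y' ∈ l', y.2 < y'.2) ∨ (∀ y ∈ l, ∀ y' ∈ l', y'.2 < y.2) := by
  obtain ⟨H, t, rfl⟩ := List.exists_cons_of_ne_nil hne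
  obtain ⟨H', t', rfl⟩ := List.exists_cons_of_ne_nil hne'
  have hdom := fun y hy => (exists_snd_eq_iff hl y.2).1 ⟨y, hy, rfl⟩
  have hdom' := fun y hy => (exists_snd_eq_iff hl' y.2).1 ⟨y, hy, rfl⟩
  by_cases hlt : H.2 + t.length < H'.2
  · exact .inl fun y hy y' hy' => by linarith [hdom y hy, hdom' y' hy']
  by_cases hgt : H'.2 + t'.length < H.2
  · exact .inr fun y hy y' hy' => by linarith [hdom y hy, hdom' y' hy']
  obtain ⟨y, hy, hyx⟩ := (exists_snd_eq_iff hl (max H.2 H'.2)).2 (by omega)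
  obtain ⟨y', hy', hyx'⟩ := (exists_snd_eq_iff hl' (max H.2 H'.2)).2 (by omega)
  exact absurd (hyx.trans hyx'.symm) (hD y hy y' hy')

end Chain

theorem traceEdges_cons_cons (y y' : BLPt) (l : List BLPt) :
    traceEdges (y :: y' :: l) = (y, y'.1 == y.1 + 1) :: traceEdges (y' :: l) :=
  rfl

theorem traceEdges_subset_cons (y : BLPt) (l : List BLPt) :
    traceEdges l ⊆ traceEdges (y :: l) := by
  cases l with
  | nil => exact List.Subset.refl _
  | cons y' l => exact traceEdges_cons_cons y y' l ▸ List.subset_cons_self _ _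

theorem traceEdges_subset_append (s l : List BLPt) : traceEdges l ⊆ traceEdges (s ++ l) := by
  induction s with
  | nil => exact List.Subset.refl _
  | cons y s ih => exact List.Subset.trans ih (traceEdges_subset_cons y _)

theorem mem_traceEdges_of_infix {y y' : BLPt} {l : List BLPt} (h : [y, y'] <:+: l) :
    (y, y'.1 == y.1 + 1) ∈ traceEdges l := by
  obtain ⟨s, t, rfl⟩ := h
  rw [List.append_assoc]
  exact traceEdges_subset_append s _ (traceEdges_cons_cons y y' t ▸ List.mem_cons_self)

section InBar

variable {S : Set BLPt} {l : List BLPt}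

theorem InBar.mem_or_mem (h : InBar S l) {y y' : BLPt} (hyy : [y, y'] <:+: l) :
    y ∈ S ∨ y' ∈ S := by
  have hstep : IsStep y y' := List.isChain_pair.1 (h.1.isChain.infix hyy)
  exact hstep.sndPt_eq ▸ h.2 _ (mem_traceEdges_of_infix hyy)

theorem InBar.exists_mem_isStep_of_head (h : InBar S l) {Q : BLPt} (hQ : l.head? = some Q)
    (hQS : Q ∉ S) : ∃ q ∈ S, IsStep Q q := by
  obtain ⟨t, rfl⟩ := List.head?_eq_some_iff.1 hQ
  obtain _ | ⟨q, t⟩ := t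
  · exact absurd h.1.1 (by simp)
  have hinf : [Q, q] <:+: Q :: q :: t := (List.prefix_append [Q, q] t).isInfix
  exact ⟨q, (h.mem_or_mem hinf).resolve_left hQS, List.isChain_pair.1 (h.1.isChain.infix hinf)⟩

theorem InBar.exists_mem_isStep_of_getLast (h : InBar S l) {P : BLPt}
    (hP : l.getLast? = some P) (hPS : P ∉ S) : ∃ p ∈ S, IsStep p P := by
  obtain ⟨s, rfl⟩ := List.getLast?_eq_some_iff.1 hP
  obtain rfl | ⟨s, p, rfl⟩ := s.eq_nil_or_concat
  · exact absurd h.1.1 (by simp)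
  have hinf : [p, P] <:+: s.concat p ++ [P] := by
    simpa using (List.suffix_append s [p, P]).isInfix
  exact ⟨p, (h.mem_or_mem hinf).resolve_right hPS, List.isChain_pair.1 (h.1.isChain.infix hinf)⟩

end InBar

section Rectangle

variable {a b c d : ℤ}

theorem uv_bounds_of_mem_bar {y : BLPt} (hy : y ∈ bar (rectDomain a b c d)) :
    (a - 2, c - 2) ≤ uv y ∧ uv y ≤ (b + 2, d + 2) := by
  simp only [bar, rectDomain, uv, Set.mem_union, Set.mem_ofPred_eq, Prod.mk_le_mk] at hy ⊢
  rcases hy with hy | ⟨y', ⟨-, hy'⟩, ht, hx⟩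
  · omega
  · rcases sq_eq_sq_iff_eq_or_eq_neg.1 (ht.trans (one_pow 2).symm) with ht | ht <;>
    rcases sq_eq_sq_iff_eq_or_eq_neg.1 (hx.trans (one_pow 2).symm) with hx | hx <;> omega

theorem exit_of_isStep {p P : BLPt} (hp : p ∈ rectDomain a b c d) (hs : IsStep p P)
    (hP : P ∉ rectDomain a b c d) : (a, c) ≤ uv P ∧ ¬ uv P ≤ (b, d) := by
  obtain ⟨hx, ht⟩ := hs
  simp only [rectDomain, uv, Set.mem_ofPred_eq, Prod.mk_le_mk] at hp hP ⊢
  omega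

theorem entry_of_isStep {q Q : BLPt} (hq : q ∈ rectDomain a b c d) (hs : IsStep Q q)
    (hQ : Q ∉ rectDomain a b c d) : uv Q ≤ (b, d) ∧ ¬ (a, c) ≤ uv Q := by
  obtain ⟨hx, ht⟩ := hs
  simp only [rectDomain, uv, Set.mem_ofPred_eq, Prod.mk_le_mk] at hq hQ ⊢
  omega

theorem Crosses.fst_ne_of_snd_lt {l l' : List BLPt}
    (hl : Crosses (rectDomain a b c d) l) (hl' : Crosses (rectDomain a b c d) l')
    (hlt : ∀ y ∈ l, ∀ y' ∈ l', y.2 < y'.2) : ∀ y ∈ l, ∀ y' ∈ l', y.1 ≠ y'.1 := by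
  obtain ⟨hbar, ⟨H, hH, hHl⟩, ⟨P, hP, hPl⟩⟩ := hl
  obtain ⟨hbar', ⟨Q, hQ, hQl⟩, ⟨L, hL, hLl⟩⟩ := hl'
  obtain ⟨p, hp, hpP⟩ := hbar.exists_mem_isStep_of_getLast hPl hP.2
  obtain ⟨q, hq, hQq⟩ := hbar'.exists_mem_isStep_of_head hQl hQ.2
  have hexit := exit_of_isStep hp hpP hP.2
  have hentry := entry_of_isStep hq hQq hQ.2
  have hHbd := uv_bounds_of_mem_bar hH.1
  have hLbd := uv_bounds_of_mem_bar hL.1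
  have hPQ := hlt P (List.mem_of_getLast? hPl) Q (List.mem_of_mem_head? hQl)
  have hHpar := hbar.1.2.1 H (List.mem_of_mem_head? hHl)
  have hQpar := hbar'.1.2.1 Q (List.mem_of_mem_head? hQl)
  intro y hy y' hy'
  have hy₁ := uv_head_le hbar.1.isChain hHl y hy
  have hy₂ := uv_le_getLast hbar.1.isChain hPl y hy
  have hy'₁ := uv_head_le hbar'.1.isChain hQl y' hy'
  have hy'₂ := uv_le_getLast hbar'.1.isChain hLl y' hy'
  simp only [uv, Prod.mk_le_mk, not_and_or, not_le] at hexit hentry hHbd hLbd hy₁ hy₂ hy'₁ hy'₂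
  have hsides : (b < P.2 + P.1 ∧ Q.2 + Q.1 < a) ∨ (d < P.2 - P.1 ∧ Q.2 - Q.1 < c) := by omega
  rcases hsides with hu | hv
  · have : y'.1 < y.1 := by omega
    exact this.ne'
  · have : y.1 < y'.1 := by omega
    exact this.ne

end Rectangle

end BL

open BL in
/-- **Disjoint domains force disjoint time ranges:** if `ℓ, ℓ' ∈ C(S)` and
`D(ℓ) ∩ D(ℓ') = ∅`, then `I(ℓ) ∩ I(ℓ') = ∅`. -/
theorem disjoint_domains_disjoint_times (S : Set BLPt) (hS : IsRectDomain S)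
    (l l' : List BLPt) (hl : Crosses S l) (hl' : Crosses S l')
    (hD : ∀ y ∈ l, ∀ y' ∈ l', y.2 ≠ y'.2) :
    ∀ y ∈ l, ∀ y' ∈ l', y.1 ≠ y'.1 := by
  obtain ⟨a, b, c, d, rfl⟩ := hS.exists_eq_rectDomain
  rcases snd_lt_or_gt_of_disjoint hl.1.1.isChain hl.1.1.ne_nil hl'.1.1.isChain hl'.1.1.ne_nil hD
    with hlt | hgt
  · exact hl.fst_ne_of_snd_lt hl' hlt
  · exact fun y hy y' hy' =>
      (hl'.fst_ne_of_snd_lt hl (fun y' hy' y hy => hgt y hy y' hy') y' hy' y hy).symm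
end

section
/- Broken lines compute last passage percolation: let S be a rectangular domain and ξ : S → [0,∞) a birth field. Then the last passage percolation value equals the total weight of the broken lines crossing S associated to the flow field with zero boundary conditions and births ξ: G_S(ξ) = H_S(ξ). -/
namespace BL

/-- An edge of `ℰ(S̄)` joining `y ∈ S` to `y' ∈ ∂S̄` with `t_{y'} = t_y − 1`
(a left-boundary edge, carrying the incoming boundary data `ζ°`). -/
def IsLeftBdryEdge (S : Set BLPt) (e : BLEdge) : Prop :=
  (fstPt e ∈ S ∧ sndPt e ∉ S ∧ (sndPt e).1 < (fstPt e).1) ∨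
  (sndPt e ∈ S ∧ fstPt e ∉ S ∧ (fstPt e).1 < (sndPt e).1)

/-- Zero boundary conditions: `η` vanishes on all left-boundary edges. -/
def ZeroLeftBoundary (S : Set BLPt) (η : BLEdge → ℝ) : Prop :=
  ∀ e : BLEdge, IsLeftBdryEdge S e → η e = 0

/-- The recursion defining the flow field `η(ζ°, ξ)` from the birth field `ξ`:
at every `y ∈ S`, `η(e_y^NE) = ξ_y + (η(e_y^SW) − η(e_y^NW))⁺` and
`η(e_y^SE) = ξ_y + (η(e_y^NW) − η(e_y^SW))⁺`. -/
def BirthRecursion (S : Set BLPt) (η : BLEdge → ℝ) (ξ : BLPt → ℝ) : Prop :=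
  ∀ y ∈ S, η (eNE y) = ξ y + max (η (eSW y) - η (eNW y)) 0 ∧
    η (eSE y) = ξ y + max (η (eNW y) - η (eSW y)) 0

/-- A directed path `π ∈ Π_S`: it stays in `S`, starts at the unique leftmost point
`∂₀S` (minimal `t`), ends at the unique rightmost point `∂₁S` (maximal `t`), and
satisfies `t_{i+1} = t_i + 1`, `x_{i+1} = x_i ± 1`. -/
def IsLppPath (S : Set BLPt) (p : List BLPt) : Prop :=
  p ≠ [] ∧ (∀ y ∈ p, y ∈ S) ∧
  (∀ y, p.head? = some y → ∀ y' ∈ S, y.1 ≤ y'.1) ∧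
  (∀ y, p.getLast? = some y → ∀ y' ∈ S, y'.1 ≤ y.1) ∧
  ∀ i : ℕ, ∀ h : i + 1 < p.length,
    (p[i + 1]'h).1 = (p[i]'(Nat.lt_of_succ_lt h)).1 + 1 ∧
    ((p[i + 1]'h).2 = (p[i]'(Nat.lt_of_succ_lt h)).2 + 1 ∨
      (p[i + 1]'h).2 = (p[i]'(Nat.lt_of_succ_lt h)).2 - 1)

/-- The last passage percolation value `G_S(ξ) = max_{π ∈ Π_S} Σ_{y ∈ π} ξ_y`. -/
noncomputable def lppValue (S : Set BLPt) (ξ : BLPt → ℝ) : ℝ :=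
  sSup {v : ℝ | ∃ p : List BLPt, IsLppPath S p ∧ (p.map ξ).sum = v}

end BL

/-!
In the coordinates `(m, n)` of the rectangle (a step `e^NE` raises `m`, a step `e^SE` raises `n`),
the flow with zero boundary conditions is the discrete gradient of the point-to-point last
passage times `L` from `∂₀S`: `η(e^NE) = L(m, n) - L(m, n - 1)` and
`η(e^SE) = L(m, n) - L(m - 1, n)`, since the birth recursion is the difference form of
`L(m, n) = ξ(m, n) + max (L(m - 1, n)) (L(m, n - 1))`. Of the edges leaving `S` towards smaller
`x`, those at `m = 0` carry no flow and those at `n = N` telescope to `L(M, N) = G_S(ξ)`.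
-/

namespace BL

section Edges

variable (y : BLPt)

@[simp] theorem fstPt_eNW : fstPt (eNW y) = y := rfl
@[simp] theorem sndPt_eNW : sndPt (eNW y) = (y.1 - 1, y.2 + 1) := by
  simp [sndPt, eNW, sub_eq_add_neg]
@[simp] theorem fstPt_eSE : fstPt (eSE y) = (y.1 + 1, y.2 - 1) := rfl
@[simp] theorem sndPt_eSE : sndPt (eSE y) = y := by simp [sndPt, eSE]
@[simp] theorem fstPt_eSW : fstPt (eSW y) = (y.1 - 1, y.2 - 1) := rfl
@[simp] theorem sndPt_eSW : sndPt (eSW y) = y := by simp [sndPt, eSW]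

theorem fstPt_mem_bar {S : Set BLPt} {e : BLEdge} (he : sndPt e ∈ S) : fstPt e ∈ bar S :=
  .inr ⟨sndPt e, he, by obtain ⟨_, _ | _⟩ := e <;> simp [fstPt, sndPt]⟩

theorem eq_eSW_or_eq_eSE (e : BLEdge) : e = eSW (sndPt e) ∨ e = eSE (sndPt e) := by
  obtain ⟨⟨t, x⟩, _ | _⟩ := e <;> simp [sndPt, eSW, eSE]

end Edges

section Grid

def cell (o : BLPt) (m n : ℕ) : BLPt := (o.1 + m + n, o.2 + m - n)

def IsGrid (S : Set BLPt) (o : BLPt) (M N : ℕ) : Prop :=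
  ∀ y, y ∈ S ↔ ∃ m n : ℕ, m ≤ M ∧ n ≤ N ∧ y = cell o m n

theorem IsRectDomain.exists_isGrid {S : Set BLPt} (hS : IsRectDomain S) :
    ∃ (o : BLPt) (M N : ℕ), IsGrid S o M N := by
  obtain ⟨⟨y₀, hy₀⟩, a, b, c, d, rfl⟩ := hS
  simp only [Set.mem_ofPred_eq] at hy₀
  -- `x + t = 2 i` is the least even number `≥ a` and `x - t = 2 j` the largest even number `≤ d`
  set i := (a + a % 2) / 2
  set j := (d - d % 2) / 2
  refine ⟨(i - j, i + j), ((b - b % 2) / 2 - i).toNat, (j - (c + c % 2) / 2).toNat, ?_⟩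
  rintro ⟨t, x⟩
  simp only [Set.mem_ofPred_eq, cell, Prod.mk.injEq]
  constructor
  · rintro ⟨hp, h1, h2, h3, h4⟩
    exact ⟨((t + x) / 2 - i).toNat, (j - (x - t) / 2).toNat, by omega, by omega, by omega,
      by omega⟩
  · rintro ⟨m, n, hm, hn, rfl, rfl⟩
    omega

theorem eSW_cell_succ (o : BLPt) (m n : ℕ) : eSW (cell o (m + 1) n) = eNE (cell o m n) :=
  Prod.ext (Prod.ext (by simp [eSW, eNE, cell]; ring) (by simp [eSW, eNE, cell]; ring)) rfl

theorem eNW_cell_succ (o : BLPt) (m n : ℕ) : eNW (cell o m (n + 1)) = eSE (cell o m n) :=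
  Prod.ext (Prod.ext (by simp [eNW, eSE, cell]; ring) (by simp [eNW, eSE, cell]; ring)) rfl

variable {S : Set BLPt} {o : BLPt} {M N : ℕ}

theorem IsGrid.cell_mem (hS : IsGrid S o M N) {m n : ℕ} (hm : m ≤ M) (hn : n ≤ N) :
    cell o m n ∈ S :=
  (hS _).2 ⟨m, n, hm, hn, rfl⟩

theorem IsGrid.mem_iff (hS : IsGrid S o M N) {t x : ℤ} :
    (t, x) ∈ S ↔ ∃ m n : ℕ, m ≤ M ∧ n ≤ N ∧ t = o.1 + m + n ∧ x = o.2 + m - n := by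
  simp only [hS (t, x), cell, Prod.mk.injEq]

theorem IsGrid.fstPt_eSW_notMem_iff (hS : IsGrid S o M N) {m n : ℕ} (hm : m ≤ M)
    (hn : n ≤ N) : fstPt (eSW (cell o m n)) ∉ S ↔ m = 0 := by
  simp only [fstPt_eSW, cell, hS.mem_iff, not_exists]
  constructor
  · intro h
    by_contra hm0
    exact h (m - 1) n ⟨by omega, hn, by push_cast [Nat.one_le_iff_ne_zero.2 hm0]; ring,
      by push_cast [Nat.one_le_iff_ne_zero.2 hm0]; ring⟩
  · rintro rfl
    omega

theorem IsGrid.fstPt_eSE_notMem_iff (hS : IsGrid S o M N) {m n : ℕ} (hm : m ≤ M)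
    (hn : n ≤ N) : fstPt (eSE (cell o m n)) ∉ S ↔ n = N := by
  simp only [fstPt_eSE, cell, hS.mem_iff, not_exists]
  constructor
  · intro h
    by_contra hnN
    exact h m (n + 1) ⟨hm, by omega, by push_cast; ring, by push_cast; ring⟩
  · rintro rfl
    omega

theorem IsGrid.sndPt_eNW_notMem (hS : IsGrid S o M N) (m : ℕ) :
    sndPt (eNW (cell o m 0)) ∉ S := by
  simp only [sndPt_eNW, cell, hS.mem_iff, not_exists]
  omega

end Grid

section LastPassage

/-- `lastPassage w (m + 1) (n + 1)` is the last passage time from `(0, 0)` to `(m, n)` for the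
weights `w`; the row and the column of index `0` carry the zero boundary values. -/
noncomputable def lastPassage (w : ℕ → ℕ → ℝ) : ℕ → ℕ → ℝ
  | m + 1, n + 1 => w m n + max (lastPassage w m (n + 1)) (lastPassage w (m + 1) n)
  | _, _ => 0

variable (w : ℕ → ℕ → ℝ)

@[simp] theorem lastPassage_zero_left (n : ℕ) : lastPassage w 0 n = 0 := by
  cases n <;> simp [lastPassage]

@[simp] theorem lastPassage_zero_right (m : ℕ) : lastPassage w m 0 = 0 := by
  cases m <;> simp [lastPassage]

theorem lastPassage_succ_succ (m n : ℕ) :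
    lastPassage w (m + 1) (n + 1) =
      w m n + max (lastPassage w m (n + 1)) (lastPassage w (m + 1) n) := by
  rw [lastPassage]

theorem lastPassage_nonneg {m n : ℕ} (hw : ∀ i < m, ∀ j < n, 0 ≤ w i j) :
    0 ≤ lastPassage w m n := by
  induction m generalizing n with
  | zero => simp
  | succ m ihm =>
    cases n with
    | zero => simp
    | succ n =>
      rw [lastPassage_succ_succ]
      exact add_nonneg (hw m (by omega) n (by omega))
        (le_max_of_le_left (ihm fun i hi j hj => hw i (by omega) j hj))

end LastPassage

section Flow

theorem gradient_of_birth_recursion {w ne se sw nw l₀ l₁ l₂ : ℝ}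
    (hne : ne = w + max (sw - nw) 0) (hse : se = w + max (nw - sw) 0)
    (hsw : sw = l₁ - l₀) (hnw : nw = l₂ - l₀) :
    ne = w + max l₁ l₂ - l₂ ∧ se = w + max l₁ l₂ - l₁ := by
  subst hne hse hsw hnw
  constructor
  · rw [sub_sub_sub_cancel_right, ← sub_self l₂, max_sub_sub_right]; ring
  · rw [sub_sub_sub_cancel_right, ← sub_self l₁, max_sub_sub_right, max_comm]; ring

variable {S : Set BLPt} {o : BLPt} {M N : ℕ} {ξ : BLPt → ℝ} {η : BLEdge → ℝ}

theorem IsGrid.eta_eSW_cell_zero (hS : IsGrid S o M N) (hzb : ZeroLeftBoundary S η) {n : ℕ}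
    (hn : n ≤ N) : η (eSW (cell o 0 n)) = 0 :=
  hzb _ <| .inr ⟨by simpa using hS.cell_mem (Nat.zero_le M) hn,
    (hS.fstPt_eSW_notMem_iff (Nat.zero_le M) hn).2 rfl, by simp⟩

theorem IsGrid.eta_eNW_cell_zero (hS : IsGrid S o M N) (hzb : ZeroLeftBoundary S η) {m : ℕ}
    (hm : m ≤ M) : η (eNW (cell o m 0)) = 0 :=
  hzb _ <| .inl ⟨by simpa using hS.cell_mem hm (Nat.zero_le N), hS.sndPt_eNW_notMem m, by simp⟩

theorem IsGrid.flow_eq_lastPassage_sub (hS : IsGrid S o M N) (hzb : ZeroLeftBoundary S η)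
    (hrec : BirthRecursion S η ξ) {m n : ℕ} (hm : m ≤ M) (hn : n ≤ N) :
    let L := lastPassage fun i j => ξ (cell o i j)
    η (eNE (cell o m n)) = L (m + 1) (n + 1) - L (m + 1) n ∧
      η (eSE (cell o m n)) = L (m + 1) (n + 1) - L m (n + 1) := by
  intro L
  have step {m n : ℕ} (hm : m ≤ M) (hn : n ≤ N)
      (hsw : η (eSW (cell o m n)) = L m (n + 1) - L m n)
      (hnw : η (eNW (cell o m n)) = L (m + 1) n - L m n) :
      η (eNE (cell o m n)) = L (m + 1) (n + 1) - L (m + 1) n ∧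
        η (eSE (cell o m n)) = L (m + 1) (n + 1) - L m (n + 1) := by
    obtain ⟨hne, hse⟩ := hrec _ (hS.cell_mem hm hn)
    rw [show L (m + 1) (n + 1) = _ from lastPassage_succ_succ _ m n]
    exact gradient_of_birth_recursion hne hse hsw hnw
  have column {m : ℕ} (hm : m ≤ M)
      (hsw : ∀ n ≤ N, η (eSW (cell o m n)) = L m (n + 1) - L m n) {n : ℕ} (hn : n ≤ N) :
      η (eNE (cell o m n)) = L (m + 1) (n + 1) - L (m + 1) n ∧
        η (eSE (cell o m n)) = L (m + 1) (n + 1) - L m (n + 1) := by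
    induction n with
    | zero => exact step hm hn (hsw 0 hn) (by simp [L, hS.eta_eNW_cell_zero hzb hm])
    | succ n ihn =>
      exact step hm hn (hsw _ hn) (by rw [eNW_cell_succ]; exact (ihn (by omega)).2)
  induction m generalizing n with
  | zero => exact column hm (fun n hn => by simp [L, hS.eta_eSW_cell_zero hzb hn]) hn
  | succ m ihm =>
    refine column hm (fun n hn => ?_) hn
    rw [eSW_cell_succ]
    exact (ihm (by omega) hn).1

theorem IsGrid.outflowEdges_eq (hS : IsGrid S o M N) :
    {e : BLEdge | sndPt e ∈ S ∧ fstPt e ∈ bdry S} =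
      ↑((Finset.range (N + 1)).image (fun n => eSW (cell o 0 n)) ∪
        (Finset.range (M + 1)).image (fun m => eSE (cell o m N))) := by
  ext e
  simp only [bdry, Set.mem_ofPred_eq, Set.mem_sdiff, Finset.coe_union, Finset.coe_image,
    Finset.coe_range, Set.mem_union, Set.mem_image, Set.mem_Iio]
  constructor
  · rintro ⟨he, -, hout⟩
    obtain ⟨m, n, hm, hn, hy⟩ := (hS _).1 he
    rcases eq_eSW_or_eq_eSE e with h | h <;> rw [h, hy] at hout ⊢
    · obtain rfl := (hS.fstPt_eSW_notMem_iff hm hn).1 hout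
      exact .inl ⟨n, by omega, rfl⟩
    · obtain rfl := (hS.fstPt_eSE_notMem_iff hm hn).1 hout
      exact .inr ⟨m, by omega, rfl⟩
  · rintro (⟨n, hn, rfl⟩ | ⟨m, hm, rfl⟩)
    · have he : sndPt (eSW (cell o 0 n)) ∈ S := by
        simpa using hS.cell_mem (Nat.zero_le M) (by omega : n ≤ N)
      exact ⟨he, fstPt_mem_bar he,
        (hS.fstPt_eSW_notMem_iff (Nat.zero_le M) (by omega)).2 rfl⟩
    · have he : sndPt (eSE (cell o m N)) ∈ S := by
        simpa using hS.cell_mem (by omega : m ≤ M) le_rfl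
      exact ⟨he, fstPt_mem_bar he, (hS.fstPt_eSE_notMem_iff (by omega) le_rfl).2 rfl⟩

theorem IsGrid.outflow_eq_lastPassage (hS : IsGrid S o M N) (hzb : ZeroLeftBoundary S η)
    (hrec : BirthRecursion S η ξ) :
    ∑ᶠ e ∈ {e : BLEdge | sndPt e ∈ S ∧ fstPt e ∈ bdry S}, η e =
      lastPassage (fun i j => ξ (cell o i j)) (M + 1) (N + 1) := by
  have hdisj : Disjoint ((Finset.range (N + 1)).image fun n => eSW (cell o 0 n))
      ((Finset.range (M + 1)).image fun m => eSE (cell o m N)) := by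
    simp [Finset.disjoint_left, eSW, eSE]
  rw [hS.outflowEdges_eq, finsum_mem_coe_finset, Finset.sum_union hdisj,
    Finset.sum_image (by simp [Set.InjOn, eSW, cell]),
    Finset.sum_image (by simp [Set.InjOn, eSE, cell]),
    Finset.sum_eq_zero fun n hn =>
      hS.eta_eSW_cell_zero hzb (by simpa [Nat.lt_succ_iff] using hn),
    zero_add, Finset.sum_congr rfl fun m hm =>
      (hS.flow_eq_lastPassage_sub hzb hrec (by simpa [Nat.lt_succ_iff] using hm) le_rfl).2,
    Finset.sum_range_sub (fun m => lastPassage _ m (N + 1)), lastPassage_zero_left, sub_zero]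

end Flow

section Paths

def Step (z w : BLPt) : Prop := w.1 = z.1 + 1 ∧ (w.2 = z.2 + 1 ∨ w.2 = z.2 - 1)

def IsStepPath (S : Set BLPt) (a b : BLPt) (p : List BLPt) : Prop :=
  p.head? = some a ∧ p.getLast? = some b ∧ (∀ y ∈ p, y ∈ S) ∧ p.IsChain Step

variable {S : Set BLPt} {o : BLPt} {M N : ℕ} {ξ : BLPt → ℝ}

theorem IsStepPath.concat {a b c : BLPt} {p : List BLPt} (hp : IsStepPath S a b p)
    (hbc : Step b c) (hc : c ∈ S) : IsStepPath S a c (p ++ [c]) := by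
  obtain ⟨hhead, hlast, hpS, hchain⟩ := hp
  refine ⟨?_, by simp, ?_, hchain.append (List.isChain_singleton c) ?_⟩
  · rwa [List.head?_append_of_ne_nil _ fun h => by simp [h] at hlast]
  · simp only [List.mem_append, List.mem_singleton]
    rintro y (hy | rfl)
    exacts [hpS y hy, hc]
  · simp [hlast, hbc]

theorem step_cell_iff {m n m' n' : ℕ} :
    Step (cell o m' n') (cell o m n) ↔ (m' + 1 = m ∧ n' = n) ∨ (m' = m ∧ n' + 1 = n) := by
  simp only [Step, cell]
  omega

theorem IsGrid.cell_mem_iff (hS : IsGrid S o M N) {m n : ℕ} :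
    cell o m n ∈ S ↔ m ≤ M ∧ n ≤ N := by
  simp only [cell, hS.mem_iff]
  constructor
  · rintro ⟨m', n', hm', hn', h₁, h₂⟩
    omega
  · rintro ⟨hm, hn⟩
    exact ⟨m, n, hm, hn, rfl, rfl⟩

theorem IsGrid.cell_zero_eq_iff (hS : IsGrid S o M N) {y : BLPt} (hy : y ∈ S) :
    y = cell o 0 0 ↔ ∀ y' ∈ S, y.1 ≤ y'.1 := by
  obtain ⟨m, n, -, -, rfl⟩ := (hS y).1 hy
  constructor
  · rintro h y' hy'
    obtain ⟨m', n', -, -, rfl⟩ := (hS y').1 hy'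
    simp only [cell, Prod.mk.injEq] at h ⊢
    omega
  · intro h
    have := h _ (hS.cell_mem (Nat.zero_le M) (Nat.zero_le N))
    simp only [cell, Prod.mk.injEq] at this ⊢
    omega

theorem IsGrid.cell_last_eq_iff (hS : IsGrid S o M N) {y : BLPt} (hy : y ∈ S) :
    y = cell o M N ↔ ∀ y' ∈ S, y'.1 ≤ y.1 := by
  obtain ⟨m, n, hm, hn, rfl⟩ := (hS y).1 hy
  constructor
  · rintro h y' hy'
    obtain ⟨m', n', hm', hn', rfl⟩ := (hS y').1 hy'
    simp only [cell, Prod.mk.injEq] at h ⊢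
    omega
  · intro h
    have := h _ (hS.cell_mem le_rfl le_rfl)
    simp only [cell, Prod.mk.injEq] at this ⊢
    omega

theorem IsGrid.isLppPath_iff (hS : IsGrid S o M N) {p : List BLPt} :
    IsLppPath S p ↔ IsStepPath S (cell o 0 0) (cell o M N) p := by
  have hsteps : p.IsChain Step ↔ ∀ i (h : i + 1 < p.length),
      p[i + 1].1 = p[i].1 + 1 ∧ (p[i + 1].2 = p[i].2 + 1 ∨ p[i + 1].2 = p[i].2 - 1) :=
    List.isChain_iff_getElem
  constructor
  · rintro ⟨hne, hpS, hhead, hlast, hc⟩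
    obtain ⟨a, ha⟩ := Option.ne_none_iff_exists'.1 (mt List.head?_eq_none_iff.1 hne)
    obtain ⟨b, hb⟩ := Option.ne_none_iff_exists'.1 (mt List.getLast?_eq_none_iff.1 hne)
    have haS := hpS a (List.mem_of_mem_head? ha)
    have hbS := hpS b (List.mem_of_mem_getLast? hb)
    refine ⟨?_, ?_, hpS, hsteps.2 hc⟩
    · rw [ha, (hS.cell_zero_eq_iff haS).2 (hhead a ha)]
    · rw [hb, (hS.cell_last_eq_iff hbS).2 (hlast b hb)]
  · rintro ⟨hhead, hlast, hpS, hc⟩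
    refine ⟨fun h => by simp [h] at hhead, hpS, ?_, ?_, hsteps.1 hc⟩
    · rintro y hy
      obtain rfl := Option.some_injective _ (hy.symm.trans hhead)
      exact (hS.cell_zero_eq_iff (hS.cell_mem (Nat.zero_le M) (Nat.zero_le N))).1 rfl
    · rintro y hy
      obtain rfl := Option.some_injective _ (hy.symm.trans hlast)
      exact (hS.cell_last_eq_iff (hS.cell_mem le_rfl le_rfl)).1 rfl

theorem IsGrid.sum_le_lastPassage (hS : IsGrid S o M N) (hξ : ∀ y ∈ S, 0 ≤ ξ y)
    {p : List BLPt} (hpS : ∀ y ∈ p, y ∈ S) (hp : p.IsChain Step) {m n : ℕ}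
    (hlast : p.getLast? = some (cell o m n)) :
    (p.map ξ).sum ≤ lastPassage (fun i j => ξ (cell o i j)) (m + 1) (n + 1) := by
  induction p using List.reverseRecOn generalizing m n with
  | nil => simp at hlast
  | append_singleton l w ih =>
    obtain rfl : w = cell o m n := by simpa using hlast
    obtain ⟨hm, hn⟩ := hS.cell_mem_iff.1 (hpS (cell o m n) (by simp))
    rw [lastPassage_succ_succ, List.map_append, List.sum_append, List.map_singleton,
      List.sum_singleton, add_comm]
    gcongr
    cases hl : l.getLast? with
    | none =>
      rw [List.getLast?_eq_none_iff.1 hl, List.map_nil, List.sum_nil]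
      exact le_max_of_le_left <| lastPassage_nonneg _ fun i hi j hj =>
        hξ _ (hS.cell_mem (by omega) (by omega))
    | some z =>
      have hzS := hpS z (List.mem_append_left _ (List.mem_of_mem_getLast? hl))
      obtain ⟨m', n', -, -, rfl⟩ := (hS z).1 hzS
      have hsum := ih (fun y hy => hpS y (List.mem_append_left _ hy)) hp.left_of_append hl
      have hstep : Step (cell o m' n') (cell o m n) :=
        (List.isChain_append.1 hp).2.2 _ hl _ rfl
      rcases step_cell_iff.1 hstep with ⟨rfl, rfl⟩ | ⟨rfl, rfl⟩
      · exact le_max_of_le_left hsum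
      · exact le_max_of_le_right hsum

theorem IsGrid.exists_isStepPath (hS : IsGrid S o M N) (hξ : ∀ y ∈ S, 0 ≤ ξ y) {m n : ℕ}
    (hm : m ≤ M) (hn : n ≤ N) : ∃ p, IsStepPath S (cell o 0 0) (cell o m n) p ∧
      (p.map ξ).sum = lastPassage (fun i j => ξ (cell o i j)) (m + 1) (n + 1) := by
  set L := lastPassage fun i j => ξ (cell o i j)
  have hL {i j : ℕ} (hi : i ≤ M + 1) (hj : j ≤ N + 1) : 0 ≤ L i j :=
    lastPassage_nonneg _ fun i' _ j' _ => hξ _ (hS.cell_mem (by omega) (by omega))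
  have hsucc (i j : ℕ) :
      L (i + 1) (j + 1) = ξ (cell o i j) + max (L i (j + 1)) (L (i + 1) j) :=
    lastPassage_succ_succ _ i j
  have extend {m n m' n' : ℕ} (hm : m ≤ M) (hn : n ≤ N)
      (hstep : Step (cell o m' n') (cell o m n))
      (hLmn : L (m + 1) (n + 1) = L (m' + 1) (n' + 1) + ξ (cell o m n)) :
      (∃ p, IsStepPath S (cell o 0 0) (cell o m' n') p ∧ (p.map ξ).sum = L (m' + 1) (n' + 1)) →
        ∃ p, IsStepPath S (cell o 0 0) (cell o m n) p ∧ (p.map ξ).sum = L (m + 1) (n + 1) := by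
    rintro ⟨p, hp, hsum⟩
    exact ⟨p ++ [cell o m n], hp.concat hstep (hS.cell_mem hm hn), by simp [hsum, hLmn]⟩
  induction m generalizing n with
  | zero =>
    induction n with
    | zero =>
      refine ⟨[cell o 0 0], ⟨rfl, rfl, ?_, List.isChain_singleton _⟩, ?_⟩
      · simpa using hS.cell_mem hm hn
      · simp [L, lastPassage_succ_succ]
    | succ n ihn =>
      refine extend hm hn (step_cell_iff.2 (.inr ⟨rfl, rfl⟩)) ?_ (ihn (by omega))
      rw [hsucc, show L 0 _ = 0 from lastPassage_zero_left _ _,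
        max_eq_right (hL (by omega) (by omega)), add_comm]
  | succ m ihm =>
    induction n with
    | zero =>
      refine extend hm hn (step_cell_iff.2 (.inl ⟨rfl, rfl⟩)) ?_ (ihm (by omega) hn)
      rw [hsucc, show L _ 0 = 0 from lastPassage_zero_right _ _,
        max_eq_left (hL (by omega) (by omega)), add_comm]
    | succ n ihn =>
      rcases max_choice (L (m + 1) (n + 1 + 1)) (L (m + 1 + 1) (n + 1)) with h | h
      · refine extend hm hn (step_cell_iff.2 (.inl ⟨rfl, rfl⟩)) ?_ (ihm (by omega) hn)
        rw [hsucc, h, add_comm]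
      · refine extend hm hn (step_cell_iff.2 (.inr ⟨rfl, rfl⟩)) ?_ (ihn (by omega))
        rw [hsucc, h, add_comm]

end Paths

end BL

open BL in
theorem lpp_eq_broken_line_weight_general (S : Set BLPt) (hS : IsRectDomain S)
    (ξ : BLPt → ℝ) (hξ : ∀ y ∈ S, 0 ≤ ξ y)
    (η : BLEdge → ℝ)
    (hzb : ZeroLeftBoundary S η) (hrec : BirthRecursion S η ξ) :
    lppValue S ξ = ∑ᶠ e ∈ {e : BLEdge | sndPt e ∈ S ∧ fstPt e ∈ bdry S}, η e := by
  obtain ⟨o, M, N, hS⟩ := hS.exists_isGrid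
  rw [hS.outflow_eq_lastPassage hzb hrec]
  refine IsGreatest.csSup_eq ⟨?_, ?_⟩
  · obtain ⟨p, hp, hsum⟩ := hS.exists_isStepPath hξ le_rfl le_rfl
    exact ⟨p, hS.isLppPath_iff.2 hp, hsum⟩
  · rintro _ ⟨p, hp, rfl⟩
    obtain ⟨-, hlast, hpS, hchain⟩ := hS.isLppPath_iff.1 hp
    exact hS.sum_le_lastPassage hξ hpS hchain hlast

open BL in
/-- **Broken lines compute last passage percolation:** for a rectangular domain `S` and
a birth field `ξ ≥ 0` on `S`, if `η` is the flow field with zero boundary conditions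
and births `ξ`, then `G_S(ξ) = H_S(ξ)`, the total flow out through the left-pointing
boundary edges (equivalently, the total weight of the broken lines crossing `S`). -/
theorem lpp_eq_broken_line_weight (S : Set BLPt) (hS : IsRectDomain S)
    (ξ : BLPt → ℝ) (hξ : ∀ y ∈ S, 0 ≤ ξ y)
    (η : BLEdge → ℝ) (hη : IsFlowField S η)
    (hzb : ZeroLeftBoundary S η) (hrec : BirthRecursion S η ξ) :
    lppValue S ξ = ∑ᶠ e ∈ {e : BLEdge | sndPt e ∈ S ∧ fstPt e ∈ bdry S}, η e :=
  lpp_eq_broken_line_weight_general S hS ξ hξ η hzb hrec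
end
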